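/- arXiv:1006.3776 — 11 statements merged into one kernel-verified Lean document; each statement's English description precedes it below -/
import Mathlib

section
/- Let G be a finite simple graph with maximum degree Δ(G) = 3. If mad(G) < 36/13, then the injective chromatic number of G satisfies χ_i(G) ≤ 5. -/
/-!
A greedy colouring with five colours succeeds as soon as every nonempty vertex set `S` contains
a vertex sharing a neighbour with at most four other vertices of `S`. If some `S` has no such
vertex, then every `v ∈ S` has degree 3, every neighbour of `v` has at least two neighbours in `S`,
and at most one neighbour of `v` has exactly two. Double counting the edges between `S` and the
vertices with two, respectively three, neighbours in `S` then shows that `S` together with its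
neighbourhood induces a subgraph of average degree at least `36/13`.
-/

open SimpleGraph

/-- An injective coloring of `G`: any two distinct vertices with a common neighbor
receive distinct colors. -/
def IsInjColoring {V α : Type*} (G : SimpleGraph V) (c : V → α) : Prop :=
  ∀ ⦃u v : V⦄, u ≠ v → (∃ w, G.Adj u w ∧ G.Adj v w) → c u ≠ c v

/-- The injective chromatic number of `G`: the least `k` such that `G` has an
injective coloring with `k` colors. -/
noncomputable def injChromNum {V : Type*} (G : SimpleGraph V) : ℕ :=
  sInf {k | ∃ c : V → Fin k, IsInjColoring G c}

open Finset

namespace SimpleGraph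

variable {V : Type*} (G : SimpleGraph V)

def degreeIn [DecidableRel G.Adj] (S : Finset V) (v : V) : ℕ := #{w ∈ S | G.Adj v w}

def injNeighborsIn [Fintype V] [DecidableEq V] [DecidableRel G.Adj] (S : Finset V) (v : V) :
    Finset V :=
  {w ∈ S.erase v | ∃ u, G.Adj v u ∧ G.Adj w u}

section InjNeighbors

variable [Fintype V] [DecidableEq V] [DecidableRel G.Adj] {G} {S : Finset V} {v w x : V}

theorem mem_injNeighborsIn :
    w ∈ G.injNeighborsIn S v ↔ w ∈ S ∧ w ≠ v ∧ ∃ u, G.Adj v u ∧ G.Adj w u := by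
  simp [injNeighborsIn, and_assoc, and_comm (a := w ∈ S)]

theorem mem_injNeighborsIn_comm (hv : v ∈ S) (hw : w ∈ G.injNeighborsIn S v) :
    v ∈ G.injNeighborsIn S w := by
  obtain ⟨-, hwv, u, hvu, hwu⟩ := mem_injNeighborsIn.1 hw
  exact mem_injNeighborsIn.2 ⟨hv, hwv.symm, u, hwu, hvu⟩

theorem mem_injNeighborsIn_erase (hw : w ∈ G.injNeighborsIn S v) (hwx : w ≠ x) :
    w ∈ G.injNeighborsIn (S.erase x) v := by
  obtain ⟨hwS, hwv, hcommon⟩ := mem_injNeighborsIn.1 hw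
  exact mem_injNeighborsIn.2 ⟨mem_erase.2 ⟨hwx, hwS⟩, hwv, hcommon⟩

theorem exists_isInjColoring_of_forall_exists_card_injNeighborsIn_le {k : ℕ}
    (h : ∀ S : Finset V, S.Nonempty → ∃ v ∈ S, #(G.injNeighborsIn S v) ≤ k) :
    ∃ c : V → Fin (k + 1), IsInjColoring G c := by
  suffices ∀ S : Finset V, ∃ c : V → Fin (k + 1), ∀ v ∈ S, ∀ w ∈ G.injNeighborsIn S v, c v ≠ c w by
    obtain ⟨c, hc⟩ := this univ
    exact ⟨c, fun v w hvw hcommon => hc v (mem_univ v) w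
      (mem_injNeighborsIn.2 ⟨mem_univ w, hvw.symm, hcommon⟩)⟩
  intro S
  induction S using Finset.strongInduction with
  | H S ih =>
  obtain rfl | hne := S.eq_empty_or_nonempty
  · exact ⟨0, by simp⟩
  obtain ⟨v, hvS, hv⟩ := h S hne
  obtain ⟨c, hc⟩ := ih (S.erase v) (erase_ssubset hvS)
  obtain ⟨b, -, hb⟩ := exists_mem_notMem_of_card_lt_card (s := (G.injNeighborsIn S v).image c)
    (t := univ) (by simpa using card_image_le.trans_lt (Nat.lt_succ_of_le hv))
  refine ⟨Function.update c v b, fun x hx y hy => ?_⟩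
  have hyx : y ≠ x := (mem_injNeighborsIn.1 hy).2.1
  by_cases hxv : x = v
  · subst hxv
    rw [Function.update_self, Function.update_of_ne hyx]
    exact fun hby => hb (hby ▸ mem_image_of_mem c hy)
  by_cases hyv : y = v
  · subst hyv
    rw [Function.update_self, Function.update_of_ne hxv]
    exact fun hxb => hb (hxb ▸ mem_image_of_mem c (mem_injNeighborsIn_comm hx hy))
  rw [Function.update_of_ne hxv, Function.update_of_ne hyv]
  exact hc x (mem_erase.2 ⟨hxv, hx⟩) y (mem_injNeighborsIn_erase hy hyv)

end InjNeighbors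

theorem degreeIn_le_degree [Fintype V] [DecidableRel G.Adj] (S : Finset V) (u : V) :
    G.degreeIn S u ≤ G.degree u := by
  rw [degreeIn, ← card_neighborFinset_eq_degree]
  exact card_le_card fun w hw => (G.mem_neighborFinset u w).2 (mem_filter.1 hw).2

section LocalStructure

variable [Fintype V] [DecidableEq V] [DecidableRel G.Adj] {G} {S : Finset V} {u u' v : V}

theorem card_injNeighborsIn_le_sum (hv : v ∈ S) :
    #(G.injNeighborsIn S v) ≤ ∑ u ∈ G.neighborFinset v, (G.degreeIn S u - 1) := by
  have hcover : G.injNeighborsIn S v ⊆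
      (G.neighborFinset v).biUnion fun u => ({w ∈ S | G.Adj u w} : Finset V).erase v := by
    intro w hw
    obtain ⟨hwS, hwv, u, hvu, hwu⟩ := mem_injNeighborsIn.1 hw
    exact mem_biUnion.2 ⟨u, (G.mem_neighborFinset v u).2 hvu,
      mem_erase.2 ⟨hwv, mem_filter.2 ⟨hwS, hwu.symm⟩⟩⟩
  refine (card_le_card hcover).trans (card_biUnion_le.trans (sum_le_sum fun u hu => ?_))
  rw [card_erase_of_mem (mem_filter.2 ⟨hv, ((G.mem_neighborFinset v u).1 hu).symm⟩), degreeIn]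

/-- Each neighbour `u` of `v` accounts for at most `degreeIn S u - 1 ≤ 2` vertices of
`G.injNeighborsIn S v`. -/
theorem five_add_two_mul_card_le (hΔ : ∀ v, G.degree v ≤ 3) (hv : v ∈ S)
    (h5 : 5 ≤ #(G.injNeighborsIn S v)) {t : Finset V} (ht : t ⊆ G.neighborFinset v) :
    5 + 2 * #t ≤ ∑ u ∈ t, (G.degreeIn S u - 1) + 2 * G.degree v := by
  have hrest : ∑ u ∈ G.neighborFinset v \ t, (G.degreeIn S u - 1) ≤ #(G.neighborFinset v \ t) * 2 :=
    sum_le_card_nsmul _ _ _ fun u _ => by have := (G.degreeIn_le_degree S u).trans (hΔ u); omega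
  have hsum := card_injNeighborsIn_le_sum (G := G) hv
  rw [← sum_sdiff ht] at hsum
  rw [card_sdiff_of_subset ht, card_neighborFinset_eq_degree] at hrest
  have ht3 : #t ≤ G.degree v := card_neighborFinset_eq_degree G v ▸ card_le_card ht
  omega

theorem degree_eq_three_of_five_le_card_injNeighborsIn (hΔ : ∀ v, G.degree v ≤ 3) (hv : v ∈ S)
    (h5 : 5 ≤ #(G.injNeighborsIn S v)) : G.degree v = 3 := by
  have hempty := five_add_two_mul_card_le hΔ hv h5 (empty_subset _)
  rw [sum_empty, card_empty] at hempty
  have := hΔ v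
  omega

theorem two_le_degreeIn_of_adj (hΔ : ∀ v, G.degree v ≤ 3) (hv : v ∈ S)
    (h5 : 5 ≤ #(G.injNeighborsIn S v)) (hvu : G.Adj v u) : 2 ≤ G.degreeIn S u := by
  have hsingle := five_add_two_mul_card_le hΔ hv h5
    (singleton_subset_iff.2 ((G.mem_neighborFinset v u).2 hvu))
  rw [sum_singleton, card_singleton] at hsingle
  have := hΔ v
  omega

theorem five_le_degreeIn_add_degreeIn (hΔ : ∀ v, G.degree v ≤ 3) (hv : v ∈ S)
    (h5 : 5 ≤ #(G.injNeighborsIn S v)) (hvu : G.Adj v u) (hvu' : G.Adj v u') (huu' : u ≠ u') :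
    5 ≤ G.degreeIn S u + G.degreeIn S u' := by
  have hpair := five_add_two_mul_card_le hΔ hv h5 (t := {u, u'}) (by
    simp [insert_subset_iff, hvu, hvu'])
  rw [sum_pair huu', card_pair huu'] at hpair
  have := hΔ v
  have := two_le_degreeIn_of_adj hΔ hv h5 hvu
  have := two_le_degreeIn_of_adj hΔ hv h5 hvu'
  omega

end LocalStructure

theorem degreeIn_mono [DecidableRel G.Adj] {S T : Finset V} (h : S ⊆ T) (u : V) :
    G.degreeIn S u ≤ G.degreeIn T u :=
  card_le_card (filter_subset_filter _ h)

theorem mem_of_adj_of_degreeIn_eq_degree [Fintype V] [DecidableRel G.Adj] {S : Finset V} {u v : V}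
    (hv : G.degreeIn S v = G.degree v) (hvu : G.Adj v u) : u ∈ S := by
  have hsub : ({w ∈ S | G.Adj v w} : Finset V) ⊆ G.neighborFinset v :=
    fun w hw => (G.mem_neighborFinset v w).2 (mem_filter.1 hw).2
  have heq := eq_of_subset_of_card_le hsub (by rw [card_neighborFinset_eq_degree, ← hv, degreeIn])
  have hu : u ∈ ({w ∈ S | G.Adj v w} : Finset V) := heq ▸ (G.mem_neighborFinset v u).2 hvu
  exact (mem_filter.1 hu).1

theorem sum_degreeIn_eq_sum_degree [Fintype V] [DecidableRel G.Adj] (S : Finset V) :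
    ∑ u, G.degreeIn S u = ∑ v ∈ S, G.degree v := by
  refine (sum_card_bipartiteAbove_eq_sum_card_bipartiteBelow G.Adj).trans
    (sum_congr rfl fun v _ => ?_)
  rw [← card_neighborFinset_eq_degree, neighborFinset_eq_filter]
  simp only [bipartiteBelow, G.adj_comm]

theorem two_mul_ncard_edgeSet_induce [Fintype V] [DecidableRel G.Adj] (W : Finset V) :
    2 * ((⊤ : G.Subgraph).induce W).edgeSet.ncard = ∑ w ∈ W, G.degreeIn W w := by
  classical
  set H := (⊤ : G.Subgraph).induce (W : Set V)
  rw [← H.edgeSet_spanningCoe, ← coe_edgeFinset, Set.ncard_coe_finset,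
    ← sum_degrees_eq_twice_card_edges, ← sum_subset (subset_univ W)]
  · refine sum_congr rfl fun v hv => ?_
    rw [← card_neighborFinset_eq_degree, degreeIn]
    congr 1
    ext u
    simp [H, hv]
  · intro v _ hv
    rw [← card_neighborFinset_eq_degree, card_eq_zero, eq_empty_iff_forall_notMem]
    simp [H, hv]

section Counting

variable [Fintype V] [DecidableEq V] [DecidableRel G.Adj] {G} {S : Finset V}

theorem degreeIn_eq_zero_or_two_or_three (hΔ : ∀ v, G.degree v ≤ 3)
    (hS : ∀ v ∈ S, 5 ≤ #(G.injNeighborsIn S v)) (u : V) :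
    G.degreeIn S u = 0 ∨ G.degreeIn S u = 2 ∨ G.degreeIn S u = 3 := by
  obtain h0 | ⟨w, hw⟩ := ({w ∈ S | G.Adj u w} : Finset V).eq_empty_or_nonempty
  · exact Or.inl (card_eq_zero.2 h0)
  obtain ⟨hwS, huw⟩ := mem_filter.1 hw
  have := two_le_degreeIn_of_adj hΔ hwS (hS w hwS) huw.symm
  have := (G.degreeIn_le_degree S u).trans (hΔ u)
  omega

theorem two_mul_card_add_three_mul_card (hΔ : ∀ v, G.degree v ≤ 3)
    (hS : ∀ v ∈ S, 5 ≤ #(G.injNeighborsIn S v)) :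
    2 * #({u | G.degreeIn S u = 2} : Finset V) + 3 * #({u | G.degreeIn S u = 3} : Finset V)
      = 3 * #S := by
  have hsplit : ∀ u, G.degreeIn S u =
      2 * (if G.degreeIn S u = 2 then 1 else 0) + 3 * (if G.degreeIn S u = 3 then 1 else 0) := by
    intro u
    rcases degreeIn_eq_zero_or_two_or_three hΔ hS u with h | h | h <;> simp [h]
  calc _ = ∑ u, G.degreeIn S u := by
        simp only [card_filter, mul_sum, ← sum_add_distrib, ← hsplit]
    _ = ∑ v ∈ S, 3 := by
        rw [sum_degreeIn_eq_sum_degree]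
        exact sum_congr rfl fun v hv =>
          degree_eq_three_of_five_le_card_injNeighborsIn hΔ hv (hS v hv)
    _ = 3 * #S := by rw [sum_const, smul_eq_mul, mul_comm]

theorem card_filter_adj_le_one (hΔ : ∀ v, G.degree v ≤ 3)
    (hS : ∀ v ∈ S, 5 ≤ #(G.injNeighborsIn S v)) {T : Finset V} (hT : ∀ u ∈ T, G.degreeIn S u = 2)
    {v : V} (hv : v ∈ S) : #({u ∈ T | G.Adj u v} : Finset V) ≤ 1 := by
  refine card_le_one.2 fun u hu u' hu' => by_contra fun huu' => ?_
  obtain ⟨huT, huv⟩ := mem_filter.1 hu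
  obtain ⟨hu'T, hu'v⟩ := mem_filter.1 hu'
  have := five_le_degreeIn_add_degreeIn hΔ hv (hS v hv) huv.symm hu'v.symm huu'
  rw [hT u huT, hT u' hu'T] at this
  omega

theorem two_mul_card_le_card_filter_exists_adj (hΔ : ∀ v, G.degree v ≤ 3)
    (hS : ∀ v ∈ S, 5 ≤ #(G.injNeighborsIn S v)) {T : Finset V} (hT : ∀ u ∈ T, G.degreeIn S u = 2) :
    2 * #T ≤ #({v ∈ S | ∃ u ∈ T, G.Adj u v} : Finset V) := by
  calc 2 * #T = ∑ u ∈ T, G.degreeIn S u := by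
        rw [sum_congr rfl hT, sum_const, smul_eq_mul, mul_comm]
    _ = ∑ v ∈ S, #({u ∈ T | G.Adj u v} : Finset V) :=
        sum_card_bipartiteAbove_eq_sum_card_bipartiteBelow G.Adj
    _ ≤ ∑ v ∈ S, if ∃ u ∈ T, G.Adj u v then 1 else 0 := sum_le_sum fun v hv => by
        split_ifs with h
        · exact card_filter_adj_le_one hΔ hS hT hv
        · simp only [not_exists, not_and] at h
          simp [filter_false_of_mem h]
    _ = #({v ∈ S | ∃ u ∈ T, G.Adj u v} : Finset V) := (card_filter _ _).symm

theorem card_inter_add_two_mul_card_sdiff_le (hΔ : ∀ v, G.degree v ≤ 3)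
    (hS : ∀ v ∈ S, 5 ≤ #(G.injNeighborsIn S v)) :
    #(({u | G.degreeIn S u = 3} : Finset V) ∩ S) + 2 * #(({u | G.degreeIn S u = 2} : Finset V) \ S)
      ≤ #S := by
  set X : Finset V := {u | G.degreeIn S u = 2}
  set A : Finset V := {v ∈ S | ∃ u ∈ X \ S, G.Adj u v}
  have hA : 2 * #(X \ S) ≤ #A := two_mul_card_le_card_filter_exists_adj hΔ hS
    fun u hu => (mem_filter.1 (mem_sdiff.1 hu).1).2
  have hdisj : Disjoint (({u | G.degreeIn S u = 3} : Finset V) ∩ S) A := by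
    refine Finset.disjoint_left.2 fun v hv hvA => ?_
    obtain ⟨hv3, hvS⟩ := mem_inter.1 hv
    obtain ⟨-, u, hu, huv⟩ := mem_filter.1 hvA
    have hdeg : G.degreeIn S v = G.degree v := by
      rw [(mem_filter.1 hv3).2, degree_eq_three_of_five_le_card_injNeighborsIn hΔ hvS (hS v hvS)]
    exact (mem_sdiff.1 hu).2 (G.mem_of_adj_of_degreeIn_eq_degree hdeg huv.symm)
  have hunion : #((({u | G.degreeIn S u = 3} : Finset V) ∩ S) ∪ A) ≤ #S :=
    card_le_card (union_subset inter_subset_right (filter_subset _ _))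
  rw [card_union_of_disjoint hdisj] at hunion
  omega

theorem exists_superset_thirtySix_mul_card_le (hΔ : ∀ v, G.degree v ≤ 3)
    (hS : ∀ v ∈ S, 5 ≤ #(G.injNeighborsIn S v)) :
    ∃ W, S ⊆ W ∧ 36 * #W ≤ 13 * ∑ w ∈ W, G.degreeIn W w := by
  set X : Finset V := {u | G.degreeIn S u = 2}
  set Y : Finset V := {u | G.degreeIn S u = 3}
  have hXY : Disjoint X Y := disjoint_filter.2 fun u _ h2 h3 => by omega
  have hdisjS : Disjoint S (X \ S) := disjoint_sdiff
  have hdisjSX : Disjoint (S ∪ X \ S) (Y \ S) :=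
    disjoint_union_left.2 ⟨disjoint_sdiff, hXY.mono sdiff_subset sdiff_subset⟩
  set W := S ∪ X \ S ∪ Y \ S
  have hSW : S ⊆ W := subset_union_left.trans subset_union_left
  have hNW : ∀ v ∈ S, G.neighborFinset v ⊆ {w ∈ W | G.Adj v w} := by
    intro v hv u hu
    rw [mem_neighborFinset] at hu
    refine mem_filter.2 ⟨?_, hu⟩
    have h2 := two_le_degreeIn_of_adj hΔ hv (hS v hv) hu
    by_cases huS : u ∈ S
    · exact hSW huS
    rcases degreeIn_eq_zero_or_two_or_three hΔ hS u with h | h | h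
    · omega
    · exact mem_union_left _ (mem_union_right _ (mem_sdiff.2 ⟨mem_filter.2 ⟨mem_univ u, h⟩, huS⟩))
    · exact mem_union_right _ (mem_sdiff.2 ⟨mem_filter.2 ⟨mem_univ u, h⟩, huS⟩)
  have hsumS : #S • 3 ≤ ∑ v ∈ S, G.degreeIn W v := card_nsmul_le_sum _ _ _ fun v hv => by
    rw [← degree_eq_three_of_five_le_card_injNeighborsIn hΔ hv (hS v hv),
      ← card_neighborFinset_eq_degree]
    exact card_le_card (hNW v hv)
  have hsumX : #(X \ S) • 2 ≤ ∑ v ∈ X \ S, G.degreeIn W v := card_nsmul_le_sum _ _ _ fun v hv =>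
    (mem_filter.1 (mem_sdiff.1 hv).1).2 ▸ G.degreeIn_mono hSW v
  have hsumY : #(Y \ S) • 3 ≤ ∑ v ∈ Y \ S, G.degreeIn W v := card_nsmul_le_sum _ _ _ fun v hv =>
    (mem_filter.1 (mem_sdiff.1 hv).1).2 ▸ G.degreeIn_mono hSW v
  have hcardW : #W = #S + #(X \ S) + #(Y \ S) := by
    rw [card_union_of_disjoint hdisjSX, card_union_of_disjoint hdisjS]
  have hsumW : ∑ w ∈ W, G.degreeIn W w = ∑ v ∈ S, G.degreeIn W v + ∑ v ∈ X \ S, G.degreeIn W v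
      + ∑ v ∈ Y \ S, G.degreeIn W v := by
    rw [sum_union hdisjSX, sum_union hdisjS]
  have hXY3 : 2 * #X + 3 * #Y = 3 * #S := two_mul_card_add_three_mul_card hΔ hS
  have hX2 := (two_mul_card_le_card_filter_exists_adj hΔ hS (T := X)
    fun u hu => (mem_filter.1 hu).2).trans (card_le_card (filter_subset _ S))
  have hYX : #(Y ∩ S) + 2 * #(X \ S) ≤ #S := card_inter_add_two_mul_card_sdiff_le hΔ hS
  have hXS : #(X \ S) ≤ #X := card_le_card sdiff_subset
  have hY : #(Y \ S) + #(Y ∩ S) = #Y := card_sdiff_add_card_inter Y S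
  simp only [smul_eq_mul] at hsumS hsumX hsumY
  -- With `p = #(X \ S)`, `q = #(Y \ S)` it remains to show `10 p ≤ 3 #S + 3 q`, which follows
  -- from `3 q ≥ 6 p - 2 #X`, `2 #X ≤ #S` and `p ≤ #X`.
  exact ⟨W, hSW, by omega⟩

end Counting

theorem exists_card_injNeighborsIn_le_four [Fintype V] [DecidableEq V] [DecidableRel G.Adj]
    (hΔ : ∀ v, G.degree v ≤ 3)
    (hmad : ∀ H : G.Subgraph, H.verts.Nonempty →
      (2 * H.edgeSet.ncard : ℚ) / H.verts.ncard < 36 / 13)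
    {S : Finset V} (hS : S.Nonempty) : ∃ v ∈ S, #(G.injNeighborsIn S v) ≤ 4 := by
  by_contra! h5
  obtain ⟨W, hSW, hW⟩ := exists_superset_thirtySix_mul_card_le hΔ h5
  rw [← two_mul_ncard_edgeSet_induce] at hW
  have hWne : ((⊤ : G.Subgraph).induce (W : Set V)).verts.Nonempty := (hS.mono hSW).to_set
  have hlt := hmad _ hWne
  rw [Subgraph.induce_verts, Set.ncard_coe_finset,
    div_lt_div_iff₀ (by exact_mod_cast (hS.mono hSW).card_pos) (by norm_num)] at hlt
  have hW' : (36 * #W : ℚ) ≤ 13 * (2 * ((⊤ : G.Subgraph).induce (W : Set V)).edgeSet.ncard) := by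
    exact_mod_cast hW
  linarith

end SimpleGraph

/-- If `Δ(G) = 3` and `mad(G) < 36/13`, then `χᵢ(G) ≤ 5`. -/
theorem injChromNum_le_five_of_maxDegree_eq_three {V : Type*} [Fintype V]
    (G : SimpleGraph V) [DecidableRel G.Adj]
    (hΔ : G.maxDegree = 3)
    (hmad : ∀ H : G.Subgraph, H.verts.Nonempty →
      (2 * H.edgeSet.ncard : ℚ) / H.verts.ncard < 36 / 13) :
    injChromNum G ≤ 5 := by
  classical
  have hdeg : ∀ v, G.degree v ≤ 3 := fun v => hΔ ▸ G.degree_le_maxDegree v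
  obtain ⟨c, hc⟩ := G.exists_isInjColoring_of_forall_exists_card_injNeighborsIn_le
    fun _ hS => G.exists_card_injNeighborsIn_le_four hdeg hmad hS
  exact Nat.sInf_le ⟨c, hc⟩
end

section
/- Let G be a finite simple graph with maximum degree Δ(G) ≥ 6. If mad(G) < 14/5, then the injective chromatic number of G satisfies χ_i(G) ≤ Δ(G) + 2. -/
/-!
An injective colouring of `G` is a proper colouring of the graph joining two distinct vertices
with a common neighbour, so it suffices that every nonempty `S` contains a vertex with at most
`Δ + 1` such conflicts inside `S`: greedy colouring then uses `Δ + 2` colours.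

Suppose every vertex of `S` has at least `Δ + 2` conflicts in `S`. Let `H` consist of the edges
of `G` from `S` to vertices that lie in `S` or have two neighbours in `S`. Counting conflicts
through their middle vertex gives `Δ + 2 ≤ ∑_{w ∼ v} (d_H(w) - 1)` for `v ∈ S`. Discharging from
the initial charge `5 d_H - 14` then shows that the non-isolated part of `H` has average degree
at least `14/5`, contradicting `mad(G) < 14/5`.
-/

open SimpleGraph

open Finset

lemma Finset.exists_eq_pair_of_card_eq_two {α : Type*} [DecidableEq α] {s : Finset α} {a : α}
    (hs : #s = 2) (ha : a ∈ s) : ∃ b, a ≠ b ∧ s = {a, b} := by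
  obtain ⟨b, hb⟩ := card_eq_one.1 (by rw [card_erase_of_mem ha, hs] : #(s.erase a) = 1)
  have hba : b ∈ s.erase a := hb ▸ mem_singleton_self b
  exact ⟨b, (ne_of_mem_erase hba).symm, by rw [← insert_erase ha, hb]⟩

namespace SimpleGraph

variable {V : Type*}

def commonNeighborGraph (G : SimpleGraph V) : SimpleGraph V where
  Adj u v := u ≠ v ∧ ∃ w, G.Adj u w ∧ G.Adj v w
  symm := ⟨fun _ _ h => ⟨h.1.symm, h.2.imp fun _ hw => hw.symm⟩⟩
  loopless := ⟨fun _ h => h.1 rfl⟩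

instance [Fintype V] [DecidableEq V] (G : SimpleGraph V) [DecidableRel G.Adj] :
    DecidableRel G.commonNeighborGraph.Adj :=
  fun u v => inferInstanceAs (Decidable (u ≠ v ∧ ∃ w, G.Adj u w ∧ G.Adj v w))

theorem colorable_of_forall_exists_card_adj_lt [Fintype V] (K : SimpleGraph V)
    [DecidableRel K.Adj] {k : ℕ}
    (h : ∀ S : Finset V, S.Nonempty → ∃ v ∈ S, #{u ∈ S | K.Adj v u} < k) :
    K.Colorable k := by
  classical
  have c₀ : V → Fin k := fun v => ⟨0, by
    obtain ⟨_, _, hlt⟩ := h univ ⟨v, mem_univ v⟩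
    omega⟩
  suffices ∀ S : Finset V, ∃ c : V → Fin k, ∀ u ∈ S, ∀ w ∈ S, K.Adj u w → c u ≠ c w by
    obtain ⟨c, hc⟩ := this univ
    exact ⟨Coloring.mk c fun huw => hc _ (mem_univ _) _ (mem_univ _) huw⟩
  intro S
  induction S using Finset.strongInduction with
  | H S ih =>
    rcases S.eq_empty_or_nonempty with rfl | hS
    · exact ⟨c₀, by simp⟩
    obtain ⟨v, hv, hlt⟩ := h S hS
    obtain ⟨c, hc⟩ := ih (S.erase v) (erase_ssubset hv)
    obtain ⟨a, -, ha⟩ := exists_mem_notMem_of_card_lt_card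
      (s := {u ∈ S | K.Adj v u}.image c) (t := univ) (by simpa using card_image_le.trans_lt hlt)
    have hfree : ∀ u ∈ S, K.Adj v u → c u ≠ a := fun u hu huv hua =>
      ha (hua ▸ mem_image_of_mem c (mem_filter.2 ⟨hu, huv⟩))
    refine ⟨Function.update c v a, fun u hu w hw huw => ?_⟩
    rcases eq_or_ne u v with rfl | hu'
    · rw [Function.update_self, Function.update_of_ne huw.ne.symm]
      exact (hfree w hw huw).symm
    rcases eq_or_ne w v with rfl | hw'
    · rw [Function.update_self, Function.update_of_ne hu']
      exact hfree u hu huw.symm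
    rw [Function.update_of_ne hu', Function.update_of_ne hw']
    exact hc u (mem_erase.2 ⟨hu', hu⟩) w (mem_erase.2 ⟨hw', hw⟩) huw

end SimpleGraph

theorem injChromNum_le_of_colorable {V : Type*} {G : SimpleGraph V} {k : ℕ}
    (h : G.commonNeighborGraph.Colorable k) : injChromNum G ≤ k :=
  let ⟨C⟩ := h
  Nat.sInf_le ⟨C, fun _ _ huv hw => C.valid ⟨huv, hw⟩⟩

namespace SimpleGraph

variable {V : Type*} [Fintype V] (H : SimpleGraph V) [DecidableRel H.Adj]

theorem card_mul_le_of_discharging (f : V → V → ℕ) {c a : ℕ}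
    (h : ∀ x, 0 < H.degree x → c + ∑ y ∈ H.neighborFinset x, f x y ≤
      a * H.degree x + ∑ y ∈ H.neighborFinset x, f y x) :
    c * #{x | 0 < H.degree x} ≤ a * ∑ x, H.degree x := by
  have hx : ∀ x, (if 0 < H.degree x then c else 0) + ∑ y ∈ H.neighborFinset x, f x y ≤
      a * H.degree x + ∑ y ∈ H.neighborFinset x, f y x := by
    intro x
    split_ifs with hpos
    · exact h x hpos
    · rw [not_lt, Nat.le_zero, ← card_neighborFinset_eq_degree, card_eq_zero] at hpos
      simp [hpos]
  have hflow : ∑ x, ∑ y ∈ H.neighborFinset x, f x y = ∑ x, ∑ y ∈ H.neighborFinset x, f y x :=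
    sum_comm' fun x y => by simp [adj_comm]
  have hsum := sum_le_sum fun x (_ : x ∈ univ) => hx x
  rw [sum_add_distrib, sum_add_distrib, hflow, ← sum_filter, sum_const, smul_eq_mul,
    ← mul_sum] at hsum
  linarith

structure IsCrowded (S : Finset V) (Δ : ℕ) : Prop where
  degree_le : ∀ x, H.degree x ≤ Δ
  mem_or_mem : ∀ ⦃x y⦄, H.Adj x y → x ∈ S ∨ y ∈ S
  degree_ne_one : ∀ x ∉ S, H.degree x ≠ 1
  add_two_le_sum : ∀ v ∈ S, Δ + 2 ≤ ∑ w ∈ H.neighborFinset v, (H.degree w - 1)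

variable [DecidableEq V]

-- Doubled charges: a vertex of degree `d` starts with `10 d - 28`.
def dischargeRate (S : Finset V) (x y : V) : ℕ :=
  if H.degree y = 2 then
    if H.degree x = 4 ∧ x ∉ S then 3 else if 6 ≤ H.degree x then 5 else 4
  else if H.degree y = 3 ∧ 5 ≤ H.degree x then 2 else 0

variable {H} {S : Finset V}

lemma sum_dischargeRate_le {x : V} {M : ℕ} (h : ∀ y, H.dischargeRate S x y ≤ M) :
    ∑ y ∈ H.neighborFinset x, H.dischargeRate S x y ≤ H.degree x * M := by
  rw [← card_neighborFinset_eq_degree, ← smul_eq_mul]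
  exact sum_le_card_nsmul _ _ _ fun y _ => h y

lemma dischargeRate_le_five (x y : V) : H.dischargeRate S x y ≤ 5 := by
  unfold dischargeRate
  split_ifs <;> omega

lemma dischargeRate_le_four {x : V} (hx : H.degree x ≤ 5) (y : V) :
    H.dischargeRate S x y ≤ 4 := by
  unfold dischargeRate
  split_ifs <;> omega

lemma dischargeRate_le_three {x : V} (hx : H.degree x = 4) (hxS : x ∉ S) (y : V) :
    H.dischargeRate S x y ≤ 3 := by
  unfold dischargeRate
  split_ifs <;> simp_all

lemma dischargeRate_eq_of_degree_le_four {x : V} (hx : H.degree x ≤ 4)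
    (hxS : H.degree x = 4 → x ∈ S) (y : V) :
    H.dischargeRate S x y = if H.degree y = 2 then 4 else 0 := by
  unfold dischargeRate
  split_ifs <;> simp_all <;> omega

lemma dischargeRate_to_degree_eq_three {x : V} (hx : H.degree x = 3) (y : V) :
    H.dischargeRate S y x = if 5 ≤ H.degree y then 2 else 0 := by
  unfold dischargeRate
  split_ifs <;> omega

lemma dischargeRate_to_degree_eq_two {x : V} (hx : H.degree x = 2) (y : V) :
    H.dischargeRate S y x =
      if H.degree y = 4 ∧ y ∉ S then 3 else if 6 ≤ H.degree y then 5 else 4 :=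
  if_pos hx

end SimpleGraph

namespace SimpleGraph.IsCrowded

variable {V : Type*} [Fintype V] {H : SimpleGraph V} [DecidableRel H.Adj] {S : Finset V}
  {Δ : ℕ} (hH : H.IsCrowded S Δ)
include hH

lemma two_le_degree_of_mem {v : V} (hv : v ∈ S) : 2 ≤ H.degree v := by
  by_contra! hlt
  have hsum : ∑ w ∈ H.neighborFinset v, (H.degree w - 1) ≤ #(H.neighborFinset v) * (Δ - 1) :=
    sum_le_card_nsmul _ _ _ fun w _ => Nat.sub_le_sub_right (hH.degree_le w) 1
  rw [card_neighborFinset_eq_degree] at hsum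
  have := Nat.mul_le_mul_right (Δ - 1) (Nat.le_of_lt_succ hlt)
  have := hH.add_two_le_sum v hv
  omega

lemma two_le_degree {x : V} (hx : 0 < H.degree x) : 2 ≤ H.degree x := by
  by_cases hxS : x ∈ S
  · exact hH.two_le_degree_of_mem hxS
  · have := hH.degree_ne_one x hxS
    omega

section
variable [DecidableEq V]

lemma add_four_le_of_neighborFinset_eq_pair {v y z : V} (hv : v ∈ S)
    (hN : H.neighborFinset v = {y, z}) (hyz : y ≠ z) : Δ + 4 ≤ H.degree y + H.degree z := by
  have := hH.add_two_le_sum v hv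
  rw [hN, sum_pair hyz] at this
  have := hH.degree_le y
  have := hH.degree_le z
  omega

lemma four_le_degree_of_adj {v y : V} (hv : v ∈ S) (hd : H.degree v = 2) (hadj : H.Adj v y) :
    4 ≤ H.degree y := by
  obtain ⟨z, hyz, hN⟩ := exists_eq_pair_of_card_eq_two
    ((card_neighborFinset_eq_degree H v).trans hd) ((mem_neighborFinset H v y).2 hadj)
  have := hH.add_four_le_of_neighborFinset_eq_pair hv hN hyz
  have := hH.degree_le z
  omega

lemma three_le_degree_of_adj {x y : V} (hd : H.degree x = 2) (hadj : H.Adj x y) :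
    3 ≤ H.degree y := by
  rcases hH.mem_or_mem hadj with hxS | hyS
  · have := hH.four_le_degree_of_adj hxS hd hadj
    omega
  · by_contra! hlt
    have := hH.four_le_degree_of_adj hyS (by have := hH.two_le_degree_of_mem hyS; omega)
      hadj.symm
    omega

lemma discharge_of_degree_eq_two (hΔ : 6 ≤ Δ) {x : V} (hd : H.degree x = 2) :
    28 + ∑ y ∈ H.neighborFinset x, H.dischargeRate S x y ≤
      10 * H.degree x + ∑ y ∈ H.neighborFinset x, H.dischargeRate S y x := by
  obtain ⟨a, b, hab, hN⟩ := card_eq_two.1 ((card_neighborFinset_eq_degree H x).trans hd)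
  have ha : H.Adj x a := (mem_neighborFinset H x a).1 (by simp [hN])
  have hb : H.Adj x b := (mem_neighborFinset H x b).1 (by simp [hN])
  have hout : ∀ y, H.Adj x y → H.dischargeRate S x y = 0 := fun y hy => by
    rw [dischargeRate_eq_of_degree_le_four (by omega) (by omega),
      if_neg (by have := hH.three_le_degree_of_adj hd hy; omega)]
  rw [hN, sum_pair hab, sum_pair hab, hout a ha, hout b hb, dischargeRate_to_degree_eq_two hd,
    dischargeRate_to_degree_eq_two hd]
  have := hH.degree_le a
  have := hH.degree_le b
  by_cases hxS : x ∈ S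
  · have := hH.add_four_le_of_neighborFinset_eq_pair hxS hN hab
    split_ifs <;> omega
  · simp only [(hH.mem_or_mem ha).resolve_left hxS, (hH.mem_or_mem hb).resolve_left hxS,
      not_true_eq_false, and_false, if_false]
    split_ifs <;> omega

lemma discharge_of_degree_eq_three (hΔ : 6 ≤ Δ) {x : V} (hd : H.degree x = 3) :
    28 + ∑ y ∈ H.neighborFinset x, H.dischargeRate S x y ≤
      10 * H.degree x + ∑ y ∈ H.neighborFinset x, H.dischargeRate S y x := by
  have hout : ∀ y, H.dischargeRate S x y = if H.degree y = 2 then 4 else 0 :=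
    dischargeRate_eq_of_degree_le_four (by omega) (by omega)
  simp only [hout, dischargeRate_to_degree_eq_three hd]
  by_cases hxS : x ∈ S
  · obtain ⟨a, b, c, hab, hac, hbc, hN⟩ :=
      card_eq_three.1 ((card_neighborFinset_eq_degree H x).trans hd)
    have hsplit : ∀ f : V → ℕ, ∑ y ∈ H.neighborFinset x, f y = f a + f b + f c := fun f => by
      rw [hN, sum_insert (by simp [hab, hac]), sum_pair hbc, add_assoc]
    have hweight := hH.add_two_le_sum x hxS
    simp only [hsplit] at hweight ⊢
    have := hH.degree_le a
    have := hH.degree_le b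
    have := hH.degree_le c
    split_ifs <;> omega
  · -- a neighbour of degree 2 would lie in `S` and force `H.degree x ≥ 4`
    have hzero : ∑ y ∈ H.neighborFinset x, (if H.degree y = 2 then 4 else 0) = 0 :=
      sum_eq_zero fun y hy => if_neg fun hy2 => by
        have hxy := (mem_neighborFinset H x y).1 hy
        have := hH.four_le_degree_of_adj ((hH.mem_or_mem hxy).resolve_left hxS) hy2 hxy.symm
        omega
    omega

lemma discharge_of_degree_eq_four (hΔ : 6 ≤ Δ) {x : V} (hd : H.degree x = 4) :
    28 + ∑ y ∈ H.neighborFinset x, H.dischargeRate S x y ≤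
      10 * H.degree x + ∑ y ∈ H.neighborFinset x, H.dischargeRate S y x := by
  by_cases hxS : x ∈ S
  · obtain ⟨a, b, c, e, hab, hac, hae, hbc, hbe, hce, hN⟩ :=
      card_eq_four.1 ((card_neighborFinset_eq_degree H x).trans hd)
    have hsplit : ∀ f : V → ℕ, ∑ y ∈ H.neighborFinset x, f y = f a + f b + f c + f e :=
      fun f => by
        rw [hN, sum_insert (by simp [hab, hac, hae]), sum_insert (by simp [hbc, hbe]),
          sum_pair hce]
        ring
    have hout : ∀ y, H.dischargeRate S x y = if H.degree y = 2 then 4 else 0 :=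
      dischargeRate_eq_of_degree_le_four hd.le fun _ => hxS
    have hweight := hH.add_two_le_sum x hxS
    simp only [hsplit, hout] at hweight ⊢
    split_ifs <;> omega
  · have := sum_dischargeRate_le (dischargeRate_le_three hd hxS)
    omega

lemma discharge (hΔ : 6 ≤ Δ) {x : V} (hx : 0 < H.degree x) :
    28 + ∑ y ∈ H.neighborFinset x, H.dischargeRate S x y ≤
      10 * H.degree x + ∑ y ∈ H.neighborFinset x, H.dischargeRate S y x := by
  have := hH.two_le_degree hx
  obtain hd | hd | hd | hd | hd :
      H.degree x = 2 ∨ H.degree x = 3 ∨ H.degree x = 4 ∨ H.degree x = 5 ∨ 6 ≤ H.degree x := by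
    omega
  · exact hH.discharge_of_degree_eq_two hΔ hd
  · exact hH.discharge_of_degree_eq_three hΔ hd
  · exact hH.discharge_of_degree_eq_four hΔ hd
  · have : ∑ y ∈ H.neighborFinset x, H.dischargeRate S x y ≤ H.degree x * 4 :=
      sum_dischargeRate_le (dischargeRate_le_four hd.le)
    omega
  · have : ∑ y ∈ H.neighborFinset x, H.dischargeRate S x y ≤ H.degree x * 5 :=
      sum_dischargeRate_le (dischargeRate_le_five x)
    omega

end

theorem card_mul_le (hΔ : 6 ≤ Δ) : 14 * #{x | 0 < H.degree x} ≤ 5 * ∑ x, H.degree x := by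
  classical
  have := H.card_mul_le_of_discharging (H.dischargeRate S) fun x hx => hH.discharge hΔ hx
  omega

end SimpleGraph.IsCrowded

namespace SimpleGraph

variable {V : Type*} (G : SimpleGraph V) [DecidableRel G.Adj]

def linkGraph (S : Finset V) : SimpleGraph V where
  Adj x y := G.Adj x y ∧ (x ∈ S ∨ 2 ≤ #{u ∈ S | G.Adj x u}) ∧
    (y ∈ S ∨ 2 ≤ #{u ∈ S | G.Adj y u}) ∧ (x ∈ S ∨ y ∈ S)
  symm := ⟨fun _ _ h => ⟨h.1.symm, h.2.2.1, h.2.1, h.2.2.2.symm⟩⟩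
  loopless := ⟨fun x h => G.loopless.irrefl x h.1⟩

lemma linkGraph_le (S : Finset V) : G.linkGraph S ≤ G := fun _ _ h => h.1

variable [DecidableEq V]

instance (S : Finset V) : DecidableRel (G.linkGraph S).Adj := fun x y =>
  inferInstanceAs (Decidable (G.Adj x y ∧ (x ∈ S ∨ 2 ≤ #{u ∈ S | G.Adj x u}) ∧
    (y ∈ S ∨ 2 ≤ #{u ∈ S | G.Adj y u}) ∧ (x ∈ S ∨ y ∈ S)))

variable [Fintype V] {S : Finset V}

lemma card_commonNeighborGraph_adj_le {v : V} (hv : v ∈ S) :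
    #{u ∈ S | G.commonNeighborGraph.Adj v u} ≤
      ∑ w ∈ G.neighborFinset v, (#{u ∈ S | G.Adj w u} - 1) := by
  have hsub : {u ∈ S | G.commonNeighborGraph.Adj v u} ⊆
      (G.neighborFinset v).biUnion fun w => {u ∈ S | G.Adj w u}.erase v := by
    intro u hu
    obtain ⟨huS, hvu, w, hvw, huw⟩ := mem_filter.1 hu
    exact mem_biUnion.2 ⟨w, (mem_neighborFinset G v w).2 hvw,
      mem_erase.2 ⟨hvu.symm, mem_filter.2 ⟨huS, huw.symm⟩⟩⟩
  refine (card_le_card hsub).trans (card_biUnion_le.trans_eq (sum_congr rfl fun w hw => ?_))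
  rw [card_erase_of_mem (mem_filter.2 ⟨hv, ((mem_neighborFinset G v w).1 hw).symm⟩)]

lemma filter_adj_subset_neighborFinset_linkGraph {x : V}
    (hx : x ∈ S ∨ 2 ≤ #{u ∈ S | G.Adj x u}) :
    {u ∈ S | G.Adj x u} ⊆ (G.linkGraph S).neighborFinset x := fun u hu => by
  obtain ⟨huS, hxu⟩ := mem_filter.1 hu
  exact (mem_neighborFinset _ x u).2 ⟨hxu, hx, Or.inl huS, Or.inr huS⟩

lemma isCrowded_linkGraph
    (hS : ∀ v ∈ S, G.maxDegree + 2 ≤ #{u ∈ S | G.commonNeighborGraph.Adj v u}) :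
    (G.linkGraph S).IsCrowded S G.maxDegree where
  degree_le x := (degree_le_of_le (G.linkGraph_le S)).trans (G.degree_le_maxDegree x)
  mem_or_mem _ _ h := h.2.2.2
  degree_ne_one x hxS := by
    by_cases hx : 2 ≤ #{u ∈ S | G.Adj x u}
    · have := card_le_card (G.filter_adj_subset_neighborFinset_linkGraph (Or.inr hx))
      rw [card_neighborFinset_eq_degree] at this
      omega
    · rw [← card_neighborFinset_eq_degree, Ne, card_eq_one]
      rintro ⟨y, hy⟩
      have hxy : (G.linkGraph S).Adj x y :=
        (mem_neighborFinset _ x y).1 (hy ▸ mem_singleton_self y)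
      exact hxy.2.1.elim hxS hx
  add_two_le_sum v hv := by
    have hsub : (G.linkGraph S).neighborFinset v ⊆ G.neighborFinset v := fun w hw =>
      (mem_neighborFinset G v w).2 ((mem_neighborFinset (G.linkGraph S) v w).1 hw).1
    refine (hS v hv).trans ((G.card_commonNeighborGraph_adj_le hv).trans ?_)
    rw [← sum_subset hsub fun w hw hw' => ?_]
    · refine sum_le_sum fun w hw => Nat.sub_le_sub_right ?_ 1
      rw [← card_neighborFinset_eq_degree]
      exact card_le_card (G.filter_adj_subset_neighborFinset_linkGraph
        ((mem_neighborFinset (G.linkGraph S) v w).1 hw).2.2.1)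
    · have hvw := (mem_neighborFinset G v w).1 hw
      have : ¬ (w ∈ S ∨ 2 ≤ #{u ∈ S | G.Adj w u}) := fun h =>
        hw' ((mem_neighborFinset _ v w).2 ⟨hvw, Or.inl hv, h, Or.inl hv⟩)
      omega

end SimpleGraph

theorem SimpleGraph.sum_degree_lt_of_le {V : Type*} [Fintype V] {G H : SimpleGraph V}
    [DecidableRel H.Adj] (hHG : H ≤ G) {r : ℚ}
    (hmad : ∀ H' : G.Subgraph, H'.verts.Nonempty → (2 * H'.edgeSet.ncard : ℚ) / H'.verts.ncard < r)
    {v : V} (hv : 0 < H.degree v) :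
    ((∑ x, H.degree x : ℕ) : ℚ) < r * #{x | 0 < H.degree x} := by
  let H' : G.Subgraph :=
    { verts := ↑({x | 0 < H.degree x} : Finset V)
      Adj := H.Adj
      adj_sub := fun h => hHG h
      edge_vert := fun h => by simpa using h.degree_pos_left
      symm := H.symm }
  have hlt := hmad H' ⟨v, by simpa [H'] using hv⟩
  have he : H'.edgeSet.ncard = #H.edgeFinset := by
    rw [← Subgraph.edgeSet_spanningCoe, ← Set.ncard_coe_finset, coe_edgeFinset]
    rfl
  have hn : H'.verts.ncard = #{x | 0 < H.degree x} := Set.ncard_coe_finset _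
  have hpos : (0 : ℚ) < #{x | 0 < H.degree x} := by
    exact_mod_cast card_pos.2 ⟨v, by simpa using hv⟩
  rw [he, hn, div_lt_iff₀ hpos] at hlt
  rw [sum_degrees_eq_twice_card_edges]
  push_cast
  linarith

/-- If `Δ(G) ≥ 6` and `mad(G) < 14/5`, then `χᵢ(G) ≤ Δ(G) + 2`. -/
theorem injChromNum_le_of_maxDegree_ge_six {V : Type*} [Fintype V]
    (G : SimpleGraph V) [DecidableRel G.Adj]
    (hΔ : 6 ≤ G.maxDegree)
    (hmad : ∀ H : G.Subgraph, H.verts.Nonempty →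
      (2 * H.edgeSet.ncard : ℚ) / H.verts.ncard < 14 / 5) :
    injChromNum G ≤ G.maxDegree + 2 := by
  classical
  refine injChromNum_le_of_colorable (colorable_of_forall_exists_card_adj_lt _ fun S hS => ?_)
  by_contra! hcrowded
  have hH := G.isCrowded_linkGraph hcrowded
  obtain ⟨v, hv⟩ := hS
  have hdense : (14 * #{x | 0 < (G.linkGraph S).degree x} : ℚ) ≤
      5 * ((∑ x, (G.linkGraph S).degree x : ℕ) : ℚ) := by
    exact_mod_cast hH.card_mul_le hΔ
  have hsparse := sum_degree_lt_of_le (G.linkGraph_le S) hmad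
    (lt_of_lt_of_le two_pos (hH.two_le_degree_of_mem hv))
  linarith
end

section
/- There exists a finite simple graph G with maximum degree Δ(G) = 3, maximum average degree mad(G) = 36/13, and injective chromatic number χ_i(G) = 6. (An example is the incidence graph of the Fano plane with one vertex deleted.) -/
open SimpleGraph

/-!
Take `G` to be the incidence graph of the Fano plane with one point deleted: 6 points and 7 lines,
of which the 3 lines through the deleted point keep only 2 points. It has 18 edges on 13 vertices,
so the whole graph has average degree `36/13`. No subgraph does better, because the edges can be
split fractionally between their ends with every vertex receiving exactly `18/13`: a point gets
`4/13` from its short line and `7/13` from each of its two long lines. Any two points lie on a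
common line, so an injective colouring must give the 6 points distinct colours, and 6 colours do
suffice.
-/

open Finset

namespace SimpleGraph

variable {V : Type*}

section Orientation

variable [Fintype V] (G : SimpleGraph V) [DecidableRel G.Adj]

theorem sum_sum_neighborFinset_eq_mul_card_edgeFinset (w : V → V → ℕ) {m : ℕ}
    (hw : ∀ u v, G.Adj u v → w u v + w v u = m) :
    ∑ v, ∑ u ∈ G.neighborFinset v, w u v = m * #G.edgeFinset := by
  have swap : ∑ v, ∑ u ∈ G.neighborFinset v, w v u = ∑ v, ∑ u ∈ G.neighborFinset v, w u v := by
    simp only [neighborFinset_eq_filter, sum_filter]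
    rw [sum_comm]
    simp only [G.adj_comm]
  have : 2 * ∑ v, ∑ u ∈ G.neighborFinset v, w u v = 2 * (m * #G.edgeFinset) :=
    calc 2 * ∑ v, ∑ u ∈ G.neighborFinset v, w u v
        = ∑ v, ∑ u ∈ G.neighborFinset v, (w u v + w v u) := by
          rw [two_mul]; nth_rw 2 [← swap]; simp only [sum_add_distrib]
      _ = ∑ v, m * G.degree v := by
          refine sum_congr rfl fun v _ => ?_
          rw [sum_congr rfl fun u hu => hw u v ((G.mem_neighborFinset v u).1 hu).symm]
          simp [mul_comm]
      _ = 2 * (m * #G.edgeFinset) := by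
          rw [← mul_sum, sum_degrees_eq_twice_card_edges]; ring
  omega

variable {G}

/-- `w u v / m` is the part of the edge `uv` given to `v` (a fractional orientation). -/
theorem Subgraph.mul_ncard_edgeSet_le (w : V → V → ℕ) {m r : ℕ}
    (hw : ∀ u v, G.Adj u v → w u v + w v u = m)
    (hr : ∀ v, ∑ u ∈ G.neighborFinset v, w u v ≤ r) (H : G.Subgraph) :
    m * H.edgeSet.ncard ≤ r * H.verts.ncard := by
  classical
  set K := H.spanningCoe
  have hE : H.edgeSet.ncard = #K.edgeFinset := by
    rw [← Subgraph.edgeSet_spanningCoe, ← coe_edgeFinset, Set.ncard_coe_finset]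
  have hK : ∀ v ∉ H.verts.toFinset, K.neighborFinset v = ∅ := fun v hv => by
    ext u
    simpa [K] using fun h => hv (Set.mem_toFinset.2 (H.edge_vert h))
  calc m * H.edgeSet.ncard
      = ∑ v, ∑ u ∈ K.neighborFinset v, w u v := by
        rw [hE, K.sum_sum_neighborFinset_eq_mul_card_edgeFinset w fun u v h => hw u v h.adj_sub]
    _ = ∑ v ∈ H.verts.toFinset, ∑ u ∈ K.neighborFinset v, w u v :=
        (sum_subset (subset_univ _) fun v _ hv => by rw [hK v hv, sum_empty]).symm
    _ ≤ ∑ v ∈ H.verts.toFinset, ∑ u ∈ G.neighborFinset v, w u v :=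
        sum_le_sum fun v _ => sum_le_sum_of_subset fun u hu => by
          simpa [K] using ((K.mem_neighborFinset v u).1 hu).adj_sub
    _ ≤ ∑ v ∈ H.verts.toFinset, r := sum_le_sum fun v _ => hr v
    _ = r * H.verts.ncard := by
        rw [sum_const, smul_eq_mul, Set.ncard_eq_toFinset_card', mul_comm]

end Orientation

variable {G : SimpleGraph V}

theorem IsInjColoring.injective_comp {α ι : Type*} {c : V → α} (hc : IsInjColoring G c)
    {f : ι → V} (hf : f.Injective) (hcommon : ∀ i j, i ≠ j → ∃ w, G.Adj (f i) w ∧ G.Adj (f j) w) :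
    (c ∘ f).Injective := fun i j hij => by
  by_contra hne
  exact hc (hf.ne hne) (hcommon i j hne) hij

theorem injChromNum_le {k : ℕ} {c : V → Fin k} (hc : IsInjColoring G c) : injChromNum G ≤ k :=
  Nat.sInf_le ⟨c, hc⟩

theorem card_le_injChromNum [Finite V] {ι : Type*} [Fintype ι] {f : ι → V} (hf : f.Injective)
    (hcommon : ∀ i j, i ≠ j → ∃ w, G.Adj (f i) w ∧ G.Adj (f j) w) :
    Fintype.card ι ≤ injChromNum G := by
  have hne : {k | ∃ c : V → Fin k, IsInjColoring G c}.Nonempty :=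
    ⟨Nat.card V, Finite.equivFin V, fun _ _ huv _ => (Finite.equivFin V).injective.ne huv⟩
  obtain ⟨c, hc⟩ : ∃ c : V → Fin (injChromNum G), IsInjColoring G c := Nat.sInf_mem hne
  simpa using Fintype.card_le_of_injective _ (hc.injective_comp hf hcommon)

end SimpleGraph

def fanoLine : Fin 7 → Finset (Fin 7) :=
  ![{0, 1, 2}, {0, 3, 4}, {0, 5, 6}, {1, 3, 5}, {1, 4, 6}, {2, 3, 6}, {2, 4, 5}]

/-- Vertex `q < 6` is the point `q` and vertex `6 + j` is the line `j`; point `6` is deleted. -/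
def fanoMinusPoint : SimpleGraph (Fin 13) :=
  fromRel fun p l => ∃ q : Fin 6, ∃ j : Fin 7,
    p = Fin.castAdd 7 q ∧ l = Fin.natAdd 6 j ∧ q.castSucc ∈ fanoLine j

instance : DecidableRel fanoMinusPoint.Adj := fun u v =>
  inferInstanceAs (Decidable (u ≠ v ∧ _))

namespace fanoMinusPoint

theorem maxDegree_eq : fanoMinusPoint.maxDegree = 3 := by decide

theorem card_edgeFinset : #fanoMinusPoint.edgeFinset = 18 := by decide

def lineShare (l : Fin 13) : ℕ := if fanoMinusPoint.degree l = 2 then 4 else 7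

def weight (u v : Fin 13) : ℕ := if (v : ℕ) < 6 then lineShare u else 13 - lineShare v

theorem weight_add_weight : ∀ u v, fanoMinusPoint.Adj u v → weight u v + weight v u = 13 := by
  decide

theorem sum_weight_le : ∀ v, ∑ u ∈ fanoMinusPoint.neighborFinset v, weight u v ≤ 18 := by
  decide

theorem mad_le (H : fanoMinusPoint.Subgraph) (hH : H.verts.Nonempty) :
    (2 * H.edgeSet.ncard : ℚ) / H.verts.ncard ≤ 36 / 13 := by
  have hpos : (0 : ℚ) < H.verts.ncard := by exact_mod_cast hH.ncard_pos
  have h := H.mul_ncard_edgeSet_le weight weight_add_weight sum_weight_le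
  rw [div_le_div_iff₀ hpos (by norm_num)]
  have : (13 * H.edgeSet.ncard : ℚ) ≤ 18 * H.verts.ncard := by exact_mod_cast h
  linarith

theorem mad_top : (2 * (⊤ : fanoMinusPoint.Subgraph).edgeSet.ncard : ℚ) /
    (⊤ : fanoMinusPoint.Subgraph).verts.ncard = 36 / 13 := by
  rw [Subgraph.edgeSet_top, ← coe_edgeFinset, Set.ncard_coe_finset, card_edgeFinset,
    Subgraph.verts_top, Set.ncard_univ, Nat.card_eq_fintype_card, Fintype.card_fin]
  norm_num

/-- The three lines through the deleted point are pairwise disjoint, so they share colour `0`. -/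
def coloring : Fin 13 → Fin 6 := ![0, 1, 2, 3, 4, 5, 1, 2, 0, 3, 0, 0, 4]

theorem isInjColoring_coloring : IsInjColoring fanoMinusPoint coloring := by
  unfold IsInjColoring
  decide

theorem points_have_common_line : ∀ p q : Fin 6, p ≠ q →
    ∃ l, fanoMinusPoint.Adj (Fin.castAdd 7 p) l ∧ fanoMinusPoint.Adj (Fin.castAdd 7 q) l := by
  decide

theorem injChromNum_eq : injChromNum fanoMinusPoint = 6 :=
  le_antisymm (injChromNum_le isInjColoring_coloring) <| by
    simpa using card_le_injChromNum (Fin.castAdd_injective 6 7) points_have_common_line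

end fanoMinusPoint

/-- There exists a finite simple graph `G` with maximum degree `3`, maximum average
degree exactly `36/13` (every nonempty subgraph has average degree at most `36/13`,
and some nonempty subgraph attains it), and injective chromatic number `6`.
(An example is the incidence graph of the Fano plane with one vertex deleted.) -/
theorem exists_graph_maxDegree_three_mad_eq_and_injChromNum_six :
    ∃ (n : ℕ) (G : SimpleGraph (Fin n)) (_ : DecidableRel G.Adj),
      G.maxDegree = 3 ∧
      (∀ H : G.Subgraph, H.verts.Nonempty →
        (2 * H.edgeSet.ncard : ℚ) / H.verts.ncard ≤ 36 / 13) ∧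
      (∃ H : G.Subgraph, H.verts.Nonempty ∧
        (2 * H.edgeSet.ncard : ℚ) / H.verts.ncard = 36 / 13) ∧
      injChromNum G = 6 :=
  ⟨13, fanoMinusPoint, inferInstance, fanoMinusPoint.maxDegree_eq, fanoMinusPoint.mad_le,
    ⟨⊤, ⟨0, trivial⟩, fanoMinusPoint.mad_top⟩, fanoMinusPoint.injChromNum_eq⟩
end

section
/- Let G be a finite simple graph with maximum degree Δ = Δ(G), and let v be a vertex of G of degree 1. If the graph G − v admits an injective coloring using at most Δ + 2 colors, then G admits an injective coloring using at most Δ + 2 colors. -/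
open SimpleGraph

/-- (RC1) If `v` is a `1`-vertex of `G` and `G - v` has an injective coloring with
at most `Δ(G) + 2` colors, then so does `G`. -/
theorem rc1_one_vertex {V : Type*} [Fintype V] [DecidableEq V] (G : SimpleGraph V)
    [DecidableRel G.Adj] (v : V) (hv : G.degree v = 1)
    (h : ∃ c : ({v}ᶜ : Set V) → Fin (G.maxDegree + 2),
      IsInjColoring (G.induce ({v}ᶜ : Set V)) c) :
    ∃ c : V → Fin (G.maxDegree + 2), IsInjColoring G c := by
  obtain ⟨c', hc'⟩ := h
  obtain ⟨u0, hu0⟩ := Finset.card_eq_one.mp hv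
  have hadj : ∀ w, G.Adj v w ↔ w = u0 := by
    intro w
    rw [← SimpleGraph.mem_neighborFinset, hu0, Finset.mem_singleton]
  have hvu0 : G.Adj v u0 := (hadj u0).mpr rfl
  set T : Finset (Fin (G.maxDegree + 2)) :=
    ((G.neighborFinset u0).erase v).attach.image
      (fun u => c' ⟨u.1, Set.mem_compl_singleton_iff.mpr (Finset.ne_of_mem_erase u.2)⟩)
    with hT
  have hTcard : T.card < G.maxDegree + 2 := by
    calc T.card ≤ ((G.neighborFinset u0).erase v).attach.card := Finset.card_image_le
    _ = ((G.neighborFinset u0).erase v).card := Finset.card_attach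
    _ ≤ (G.neighborFinset u0).card := Finset.card_erase_le
    _ = G.degree u0 := (G.card_neighborFinset_eq_degree u0)
    _ ≤ G.maxDegree := G.degree_le_maxDegree u0
    _ < G.maxDegree + 2 := by omega
  have hTne : Tᶜ.Nonempty := by
    rw [← Finset.card_pos, Finset.card_compl]
    have : Fintype.card (Fin (G.maxDegree + 2)) = G.maxDegree + 2 := Fintype.card_fin _
    omega
  obtain ⟨a, ha⟩ := hTne
  rw [Finset.mem_compl] at ha
  have key : ∀ (u : V) (hu : u ≠ v), G.Adj u u0 →
      c' ⟨u, Set.mem_compl_singleton_iff.mpr hu⟩ ∈ T := by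
    intro u hu hadj'
    rw [hT]
    refine Finset.mem_image.mpr ⟨⟨u, ?_⟩, Finset.mem_attach _ _, rfl⟩
    exact Finset.mem_erase.mpr ⟨hu, (G.mem_neighborFinset u0 u).mpr hadj'.symm⟩
  refine ⟨fun w => if hw : w = v then a else c' ⟨w, Set.mem_compl_singleton_iff.mpr hw⟩, ?_⟩
  intro u w hne ⟨x, hux, hwx⟩
  by_cases hu : u = v
  · have hw : w ≠ v := fun hh => hne (hu.trans hh.symm)
    have hx : x = u0 := (hadj x).mp (hu ▸ hux)
    simp only [dif_pos hu, dif_neg hw]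
    intro hcontra
    apply ha
    rw [hcontra]
    exact key w hw (hx ▸ hwx)
  · by_cases hw : w = v
    · have hx : x = u0 := (hadj x).mp (hw ▸ hwx)
      simp only [dif_neg hu, dif_pos hw]
      intro hcontra
      apply ha
      rw [← hcontra]
      exact key u hu (hx ▸ hux)
    · have hx : x ≠ v := by
        intro hxv
        have h1 : u = u0 := (hadj u).mp (hxv ▸ hux.symm)
        have h2 : w = u0 := (hadj w).mp (hxv ▸ hwx.symm)
        exact hne (h1.trans h2.symm)
      simp only [dif_neg hu, dif_neg hw]
      refine hc' (u := ⟨u, Set.mem_compl_singleton_iff.mpr hu⟩)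
        (v := ⟨w, Set.mem_compl_singleton_iff.mpr hw⟩) ?_
        ⟨⟨x, Set.mem_compl_singleton_iff.mpr hx⟩, ?_, ?_⟩
      · simpa using hne
      · simpa using hux
      · simpa using hwx
end

section
/- Let G be a finite simple graph with maximum degree Δ = Δ(G), and let u and v be adjacent vertices of G each of degree 2. If the graph G − {u, v} admits an injective coloring using at most Δ + 2 colors, then G admits an injective coloring using at most Δ + 2 colors. -/
open SimpleGraph

private lemma exists_pair_of_card_two {V : Type*} [DecidableEq V] {s : Finset V} {v : V}
    (hs : s.card = 2) (hv : v ∈ s) : ∃ w, w ≠ v ∧ s = {v, w} := by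
  obtain ⟨a, b, hab, rfl⟩ := Finset.card_eq_two.mp hs
  simp only [Finset.mem_insert, Finset.mem_singleton] at hv
  rcases hv with rfl | rfl
  · exact ⟨b, hab.symm, rfl⟩
  · exact ⟨a, hab, Finset.pair_comm a v⟩

/-- (RC2) If `u` and `v` are adjacent `2`-vertices of `G` and `G - {u, v}` has an
injective coloring with at most `Δ(G) + 2` colors, then so does `G`. -/
theorem rc2_adjacent_two_vertices {V : Type*} [Fintype V] [DecidableEq V]
    (G : SimpleGraph V) [DecidableRel G.Adj] (u v : V)
    (huv : G.Adj u v) (hu : G.degree u = 2) (hv : G.degree v = 2)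
    (h : ∃ c : ({u, v}ᶜ : Set V) → Fin (G.maxDegree + 2),
      IsInjColoring (G.induce ({u, v}ᶜ : Set V)) c) :
    ∃ c : V → Fin (G.maxDegree + 2), IsInjColoring G c := by
  classical
  set n := G.maxDegree + 2 with hn
  obtain ⟨c, hc⟩ := h
  have hvmem : v ∈ G.neighborFinset u := (G.mem_neighborFinset u v).mpr huv
  have humem : u ∈ G.neighborFinset v := (G.mem_neighborFinset v u).mpr huv.symm
  obtain ⟨u', hu'v, hNu⟩ := exists_pair_of_card_two (s := G.neighborFinset u) hu hvmem
  obtain ⟨v', hv'u, hNv⟩ := exists_pair_of_card_two (s := G.neighborFinset v) hv humem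
  have hadju' : G.Adj u u' := by
    have : u' ∈ G.neighborFinset u := by rw [hNu]; simp
    exact (G.mem_neighborFinset u u').mp this
  have hadjv' : G.Adj v v' := by
    have : v' ∈ G.neighborFinset v := by rw [hNv]; simp
    exact (G.mem_neighborFinset v v').mp this
  have hu'u : u' ≠ u := hadju'.ne'
  have hv'v : v' ≠ v := hadjv'.ne'
  have memNu : ∀ z, G.Adj u z → z = v ∨ z = u' := by
    intro z hz
    have : z ∈ G.neighborFinset u := (G.mem_neighborFinset u z).mpr hz
    rw [hNu] at this; simpa using this
  have memNv : ∀ z, G.Adj v z → z = u ∨ z = v' := by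
    intro z hz
    have : z ∈ G.neighborFinset v := (G.mem_neighborFinset v z).mpr hz
    rw [hNv] at this; simpa using this
  -- extended coloring
  have hmemS : ∀ x : V, x ≠ u → x ≠ v → x ∈ ({u, v}ᶜ : Set V) := by
    intro x h1 h2; simp [h1, h2]
  set c0 : V → Fin n := fun x =>
    if hx : x ≠ u ∧ x ≠ v then c ⟨x, hmemS x hx.1 hx.2⟩ else 0 with hc0
  -- forbidden colors for u
  set Fu : Finset (Fin n) :=
    ((G.neighborFinset u' \ {u, v}).image c0) ∪ {c0 v'} with hFu
  have hdu' : G.degree u' ≤ G.maxDegree := G.degree_le_maxDegree u'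
  have hmemu : u ∈ G.neighborFinset u' := (G.mem_neighborFinset u' u).mpr hadju'.symm
  have hcard1 : (G.neighborFinset u' \ ({u, v} : Finset V)).card ≤ G.degree u' - 1 := by
    have hsub : G.neighborFinset u' \ ({u, v} : Finset V) ⊆ (G.neighborFinset u').erase u := by
      intro x hx
      simp only [Finset.mem_sdiff, Finset.mem_insert, Finset.mem_singleton] at hx
      exact Finset.mem_erase.mpr ⟨fun h => hx.2 (Or.inl h), hx.1⟩
    calc (G.neighborFinset u' \ ({u, v} : Finset V)).card
        ≤ ((G.neighborFinset u').erase u).card := Finset.card_le_card hsub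
      _ = G.degree u' - 1 := Finset.card_erase_of_mem hmemu
  have hFucard : Fu.card < n := by
    have h2 := Finset.card_union_le ((G.neighborFinset u' \ ({u, v} : Finset V)).image c0)
      ({c0 v'} : Finset (Fin n))
    have h3 := Finset.card_image_le (f := c0) (s := G.neighborFinset u' \ ({u, v} : Finset V))
    have h4 : 1 ≤ G.degree u' := Finset.card_pos.mpr ⟨u, hmemu⟩
    have h5 : ({c0 v'} : Finset (Fin n)).card = 1 := Finset.card_singleton _
    rw [hFu]; omega
  have : (Fuᶜ).Nonempty := by
    rw [← Finset.card_pos, Finset.card_compl, Fintype.card_fin]; omega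
  obtain ⟨a, ha'⟩ := this
  have ha : a ∉ Fu := Finset.mem_compl.mp ha'
  -- forbidden colors for v
  set Fv : Finset (Fin n) :=
    ((G.neighborFinset v' \ {u, v}).image c0) ∪ {c0 u', a} with hFv
  have hdv' : G.degree v' ≤ G.maxDegree := G.degree_le_maxDegree v'
  have hmemv : v ∈ G.neighborFinset v' := (G.mem_neighborFinset v' v).mpr hadjv'.symm
  have hcard2 : (G.neighborFinset v' \ ({u, v} : Finset V)).card ≤ G.degree v' - 1 := by
    have hsub : G.neighborFinset v' \ ({u, v} : Finset V) ⊆ (G.neighborFinset v').erase v := by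
      intro x hx
      simp only [Finset.mem_sdiff, Finset.mem_insert, Finset.mem_singleton] at hx
      exact Finset.mem_erase.mpr ⟨fun h => hx.2 (Or.inr h), hx.1⟩
    calc (G.neighborFinset v' \ ({u, v} : Finset V)).card
        ≤ ((G.neighborFinset v').erase v).card := Finset.card_le_card hsub
      _ = G.degree v' - 1 := Finset.card_erase_of_mem hmemv
  have hFvcard : Fv.card < n := by
    have h2 := Finset.card_union_le ((G.neighborFinset v' \ ({u, v} : Finset V)).image c0)
      ({c0 u', a} : Finset (Fin n))
    have h3 := Finset.card_image_le (f := c0) (s := G.neighborFinset v' \ ({u, v} : Finset V))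
    have h4 : 1 ≤ G.degree v' := Finset.card_pos.mpr ⟨v, hmemv⟩
    have h5 : ({c0 u', a} : Finset (Fin n)).card ≤ 2 := by
      calc ({c0 u', a} : Finset (Fin n)).card ≤ ({a} : Finset (Fin n)).card + 1 :=
        Finset.card_insert_le _ _
      _ = 2 := by simp
    rw [hFv]; omega
  have : (Fvᶜ).Nonempty := by
    rw [← Finset.card_pos, Finset.card_compl, Fintype.card_fin]; omega
  obtain ⟨b, hb'⟩ := this
  have hb : b ∉ Fv := Finset.mem_compl.mp hb'
  -- the final coloring
  set C : V → Fin n := fun x => if x = u then a else if x = v then b else c0 x with hC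
  have hCu : C u = a := by simp [hC]
  have hCv : C v = b := by simp [hC, huv.ne']
  have hCold : ∀ x, x ≠ u → x ≠ v → C x = c0 x := by
    intro x h1 h2; simp [hC, h1, h2]
  have hba : b ≠ a := by
    intro hEq
    exact hb (Finset.mem_union_right _ (by simp [hEq]))
  -- case: x = u
  have case_u : ∀ y w, y ≠ u → G.Adj u w → G.Adj y w → C u ≠ C y := by
    intro y w hy huw hyw
    rcases eq_or_ne y v with rfl | hyv
    · rw [hCu, hCv]; exact fun hEq => hba hEq.symm
    · rw [hCu, hCold y hy hyv]
      intro hEq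
      apply ha
      rw [hEq]
      rcases memNu w huw with rfl | rfl
      · rcases memNv y hyw.symm with rfl | rfl
        · exact absurd rfl hy
        · exact Finset.mem_union_right _ (Finset.mem_singleton_self _)
      · apply Finset.mem_union_left
        apply Finset.mem_image_of_mem
        simp only [Finset.mem_sdiff, Finset.mem_insert, Finset.mem_singleton]
        exact ⟨(G.mem_neighborFinset w y).mpr hyw.symm, by tauto⟩
  -- case: x = v
  have case_v : ∀ y w, y ≠ u → y ≠ v → G.Adj v w → G.Adj y w → C v ≠ C y := by
    intro y w hyu hyv hvw hyw
    rw [hCv, hCold y hyu hyv]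
    intro hEq
    apply hb
    rw [hEq]
    rcases memNv w hvw with rfl | rfl
    · rcases memNu y hyw.symm with rfl | rfl
      · exact absurd rfl hyv
      · exact Finset.mem_union_right _ (by simp)
    · apply Finset.mem_union_left
      apply Finset.mem_image_of_mem
      simp only [Finset.mem_sdiff, Finset.mem_insert, Finset.mem_singleton]
      exact ⟨(G.mem_neighborFinset w y).mpr hyw.symm, by tauto⟩
  -- case: both old
  have case_old : ∀ x y w, x ≠ u → x ≠ v → y ≠ u → y ≠ v → x ≠ y →
      G.Adj x w → G.Adj y w → C x ≠ C y := by
    intro x y w hxu hxv hyu hyv hxy hxw hyw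
    have hwu : w ≠ u := by
      rintro rfl
      rcases memNu x hxw.symm with rfl | rfl
      · exact hxv rfl
      · rcases memNu y hyw.symm with rfl | rfl
        · exact hyv rfl
        · exact hxy rfl
    have hwv : w ≠ v := by
      rintro rfl
      rcases memNv x hxw.symm with rfl | rfl
      · exact hxu rfl
      · rcases memNv y hyw.symm with rfl | rfl
        · exact hyu rfl
        · exact hxy rfl
    rw [hCold x hxu hxv, hCold y hyu hyv]
    have e1 : c0 x = c ⟨x, hmemS x hxu hxv⟩ := dif_pos ⟨hxu, hxv⟩
    have e2 : c0 y = c ⟨y, hmemS y hyu hyv⟩ := dif_pos ⟨hyu, hyv⟩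
    rw [e1, e2]
    apply hc
    · exact fun hEq => hxy (congrArg Subtype.val hEq)
    · refine ⟨⟨w, hmemS w hwu hwv⟩, ?_, ?_⟩
      · simpa using hxw
      · simpa using hyw
  refine ⟨C, ?_⟩
  rintro x y hxy ⟨w, hxw, hyw⟩
  rcases eq_or_ne x u with rfl | hxu
  · exact case_u y w hxy.symm hxw hyw
  rcases eq_or_ne y u with rfl | hyu
  · exact (case_u x w hxu hyw hxw).symm
  rcases eq_or_ne x v with rfl | hxv
  · exact case_v y w hyu hxy.symm hxw hyw
  rcases eq_or_ne y v with rfl | hyv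
  · exact (case_v x w hxu hxv hyw hxw).symm
  · exact case_old x y w hxu hxv hyu hyv hxy hxw hyw
end

section
/- Let G be a finite simple graph with maximum degree Δ = Δ(G). Let u₁ and u₂ be adjacent vertices of G each of degree 3, and let v₁ and v₂ be distinct vertices of degree 2 such that vᵢ is adjacent to uᵢ for i = 1, 2 (and v₁, v₂ ∉ {u₁, u₂}). If the graph G − {u₁, u₂, v₁, v₂} admits an injective coloring using at most Δ + 2 colors, then G admits an injective coloring using at most Δ + 2 colors. -/
open SimpleGraph

private lemma rc4_sum_split {V : Type*} [DecidableEq V] {s : Finset V} (f : V → ℕ) {a b : V}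
    (ha : a ∈ s) (hb : b ∈ s.erase a) :
    ∑ x ∈ s, f x = f a + f b + ∑ x ∈ (s.erase a).erase b, f x := by
  rw [← Finset.add_sum_erase s f ha, ← Finset.add_sum_erase _ f hb, add_assoc]

private lemma rc4_fresh {n : ℕ} (s : Finset (Fin (n + 2))) (hs : s.card ≤ n + 1) :
    ∃ a : Fin (n + 2), a ∉ s := by
  by_contra hcon
  push_neg at hcon
  have hsub : (Finset.univ : Finset (Fin (n + 2))) ⊆ s := fun a _ => hcon a
  have h2 := Finset.card_le_card hsub
  simp only [Finset.card_univ, Fintype.card_fin] at h2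
  omega

/-- (RC4) Let `u₁, u₂` be adjacent `3`-vertices of `G` and `v₁, v₂` distinct
`2`-vertices with `vᵢ` adjacent to `uᵢ` and `v₁, v₂ ∉ {u₁, u₂}`.  If
`G - {u₁, u₂, v₁, v₂}` has an injective coloring with at most `Δ(G) + 2` colors,
then so does `G`. -/
theorem rc4_adjacent_three_vertices {V : Type*} [Fintype V] [DecidableEq V]
    (G : SimpleGraph V) [DecidableRel G.Adj] (u₁ u₂ v₁ v₂ : V)
    (hadj : G.Adj u₁ u₂) (hu₁ : G.degree u₁ = 3) (hu₂ : G.degree u₂ = 3)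
    (hv₁ : G.degree v₁ = 2) (hv₂ : G.degree v₂ = 2)
    (hadj₁ : G.Adj u₁ v₁) (hadj₂ : G.Adj u₂ v₂) (hne : v₁ ≠ v₂)
    (hv₁u : v₁ ∉ ({u₁, u₂} : Set V)) (hv₂u : v₂ ∉ ({u₁, u₂} : Set V))
    (h : ∃ c : ({u₁, u₂, v₁, v₂}ᶜ : Set V) → Fin (G.maxDegree + 2),
      IsInjColoring (G.induce ({u₁, u₂, v₁, v₂}ᶜ : Set V)) c) :
    ∃ c : V → Fin (G.maxDegree + 2), IsInjColoring G c := by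
  classical
  set Δ := G.maxDegree with hΔdef
  obtain ⟨c, hc⟩ := h
  -- distinctness facts
  have hv₁u₁ : v₁ ≠ u₁ := by simp at hv₁u; tauto
  have hv₁u₂ : v₁ ≠ u₂ := by simp at hv₁u; tauto
  have hv₂u₁ : v₂ ≠ u₁ := by simp at hv₂u; tauto
  have hv₂u₂ : v₂ ≠ u₂ := by simp at hv₂u; tauto
  have hu₁u₂ : u₁ ≠ u₂ := G.ne_of_adj hadj
  have hΔ3 : 3 ≤ Δ := hu₁ ▸ G.degree_le_maxDegree u₁
  -- conflict sets
  set CS : V → Finset V :=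
    fun x => (G.neighborFinset x).biUnion (fun w => (G.neighborFinset w).erase x) with hCSdef
  have hmemCS : ∀ x y : V, y ≠ x → (∃ w, G.Adj x w ∧ G.Adj y w) → y ∈ CS x := by
    rintro x y hyx ⟨w, hxw, hyw⟩
    exact Finset.mem_biUnion.2 ⟨w, by simpa using hxw,
      Finset.mem_erase.2 ⟨hyx, by simpa using hyw.symm⟩⟩
  have hcardN : ∀ x w : V, G.Adj x w → ((G.neighborFinset w).erase x).card = G.degree w - 1 := by
    intro x w hxw
    rw [Finset.card_erase_of_mem (by simpa using hxw.symm),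
      SimpleGraph.card_neighborFinset_eq_degree]
  -- generic bound on conflict set cardinality
  have hCSbound : ∀ x : V, (CS x).card ≤ ∑ w ∈ G.neighborFinset x, (G.degree w - 1) := by
    intro x
    refine Finset.card_biUnion_le.trans (le_of_eq (Finset.sum_congr rfl ?_))
    intro w hw
    exact hcardN x w (by simpa using hw)
  have hdegsub : ∀ w : V, G.degree w - 1 ≤ Δ - 1 := fun w =>
    Nat.sub_le_sub_right (G.degree_le_maxDegree w) 1
  -- bound for a degree-3 vertex u with neighbors a b of degrees 3 and 2
  have hbound3 : ∀ u a b : V, G.Adj u a → G.Adj u b → a ≠ b →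
      G.degree u = 3 → G.degree a = 3 → G.degree b = 2 → (CS u).card ≤ Δ + 2 := by
    intro u a b hua hub hab hdu hda hdb
    have ha : a ∈ G.neighborFinset u := by simpa using hua
    have hb : b ∈ (G.neighborFinset u).erase a := by
      exact Finset.mem_erase.2 ⟨hab.symm, by simpa using hub⟩
    have hsum := rc4_sum_split (fun w => G.degree w - 1) ha hb
    have hT : (((G.neighborFinset u).erase a).erase b).card = 1 := by
      rw [Finset.card_erase_of_mem hb, Finset.card_erase_of_mem ha,
        SimpleGraph.card_neighborFinset_eq_degree, hdu]
    have hTle : ∑ w ∈ ((G.neighborFinset u).erase a).erase b, (G.degree w - 1)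
        ≤ 1 * (Δ - 1) := by
      have := Finset.sum_le_card_nsmul (((G.neighborFinset u).erase a).erase b)
        (fun w => G.degree w - 1) (Δ - 1) (fun x _ => hdegsub x)
      simpa [hT] using this
    have := hCSbound u
    rw [hsum] at this
    simp only [hda, hdb] at this
    omega
  -- bound for a degree-2 vertex v with a neighbor u
  have hbound2 : ∀ v u : V, G.Adj v u → G.degree v = 2 → G.degree u = 3 →
      (CS v).card ≤ Δ + 1 := by
    intro v u hvu hdv hdu
    have hu : u ∈ G.neighborFinset v := by simpa using hvu
    have hsum : ∑ w ∈ G.neighborFinset v, (G.degree w - 1)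
        = G.degree u - 1 + ∑ w ∈ (G.neighborFinset v).erase u, (G.degree w - 1) :=
      (Finset.add_sum_erase _ _ hu).symm
    have hT : ((G.neighborFinset v).erase u).card = 1 := by
      rw [Finset.card_erase_of_mem hu, SimpleGraph.card_neighborFinset_eq_degree, hdv]
    have hTle : ∑ w ∈ (G.neighborFinset v).erase u, (G.degree w - 1) ≤ 1 * (Δ - 1) := by
      have := Finset.sum_le_card_nsmul ((G.neighborFinset v).erase u)
        (fun w => G.degree w - 1) (Δ - 1) (fun x _ => hdegsub x)
      simpa [hT] using this
    have := hCSbound v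
    rw [hsum] at this
    rw [hdu] at this
    omega
  -- specific cardinality bounds
  have hmemv₂CSu₁ : v₂ ∈ CS u₁ := hmemCS u₁ v₂ hv₂u₁ ⟨u₂, hadj, hadj₂.symm⟩
  have hmemv₁CSu₂ : v₁ ∈ CS u₂ := hmemCS u₂ v₁ hv₁u₂ ⟨u₁, hadj.symm, hadj₁.symm⟩
  have h1 : ((CS u₁) \ {u₂, v₁, v₂}).card ≤ Δ + 1 := by
    have hsub : (CS u₁) \ {u₂, v₁, v₂} ⊆ (CS u₁).erase v₂ := by
      intro x hx
      simp only [Finset.mem_sdiff, Finset.mem_insert, Finset.mem_singleton] at hx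
      exact Finset.mem_erase.2 ⟨fun hh => hx.2 (Or.inr (Or.inr hh)), hx.1⟩
    have := Finset.card_le_card hsub
    rw [Finset.card_erase_of_mem hmemv₂CSu₁] at this
    have := hbound3 u₁ u₂ v₁ hadj hadj₁ hv₁u₂.symm hu₁ hu₂ hv₁
    omega
  have h2 : ((CS u₂) \ {v₁, v₂}).card ≤ Δ + 1 := by
    have hsub : (CS u₂) \ {v₁, v₂} ⊆ (CS u₂).erase v₁ := by
      intro x hx
      simp only [Finset.mem_sdiff, Finset.mem_insert, Finset.mem_singleton] at hx
      exact Finset.mem_erase.2 ⟨fun hh => hx.2 (Or.inl hh), hx.1⟩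
    have := Finset.card_le_card hsub
    rw [Finset.card_erase_of_mem hmemv₁CSu₂] at this
    have := hbound3 u₂ u₁ v₂ hadj.symm hadj₂ hv₂u₁.symm hu₂ hu₁ hv₂
    omega
  have h3 : ((CS v₁) \ {v₂}).card ≤ Δ + 1 := by
    have := hbound2 v₁ u₁ hadj₁.symm hv₁ hu₁
    have h' := Finset.card_le_card (Finset.sdiff_subset (s := CS v₁) (t := {v₂}))
    omega
  have h4 : (CS v₂).card ≤ Δ + 1 := hbound2 v₂ u₂ hadj₂.symm hv₂ hu₂
  -- the base coloring
  have hScompl : ∀ x : V, x ≠ u₁ → x ≠ u₂ → x ≠ v₁ → x ≠ v₂ →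
      x ∈ ({u₁, u₂, v₁, v₂}ᶜ : Set V) := by
    intro x h1 h2 h3 h4
    simp [h1, h2, h3, h4]
  set c₀ : V → Fin (Δ + 2) := fun x =>
    if hx : x ≠ u₁ ∧ x ≠ u₂ ∧ x ≠ v₁ ∧ x ≠ v₂ then
      c ⟨x, hScompl x hx.1 hx.2.1 hx.2.2.1 hx.2.2.2⟩
    else ⟨0, by omega⟩ with hc₀def
  -- pick colors greedily
  obtain ⟨x₁, hx₁⟩ := rc4_fresh (((CS u₁) \ {u₂, v₁, v₂}).image c₀)
    ((Finset.card_image_le).trans h1)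
  set c₁ := Function.update c₀ u₁ x₁ with hc₁def
  obtain ⟨x₂, hx₂⟩ := rc4_fresh (((CS u₂) \ {v₁, v₂}).image c₁)
    ((Finset.card_image_le).trans h2)
  set c₂ := Function.update c₁ u₂ x₂ with hc₂def
  obtain ⟨x₃, hx₃⟩ := rc4_fresh (((CS v₁) \ {v₂}).image c₂)
    ((Finset.card_image_le).trans h3)
  set c₃ := Function.update c₂ v₁ x₃ with hc₃def
  obtain ⟨x₄, hx₄⟩ := rc4_fresh ((CS v₂).image c₃)
    ((Finset.card_image_le).trans h4)
  set cf := Function.update c₃ v₂ x₄ with hcfdef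
  refine ⟨cf, ?_⟩
  -- evaluation lemmas
  have hcfv₂ : cf v₂ = x₄ := Function.update_self _ _ _
  have hcfv₁ : cf v₁ = x₃ := by
    rw [hcfdef, Function.update_of_ne hne, hc₃def, Function.update_self]
  have hcfu₂ : cf u₂ = x₂ := by
    rw [hcfdef, Function.update_of_ne hv₂u₂.symm.symm.symm,
      hc₃def, Function.update_of_ne (Ne.symm hv₁u₂), hc₂def, Function.update_self]
  have hcfu₁ : cf u₁ = x₁ := by
    rw [hcfdef, Function.update_of_ne (Ne.symm hv₂u₁), hc₃def,
      Function.update_of_ne (Ne.symm hv₁u₁), hc₂def, Function.update_of_ne hu₁u₂,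
      hc₁def, Function.update_self]
  have hcf0 : ∀ (x : V) (hx1 : x ≠ u₁) (hx2 : x ≠ u₂) (hx3 : x ≠ v₁) (hx4 : x ≠ v₂),
      cf x = c ⟨x, hScompl x hx1 hx2 hx3 hx4⟩ := by
    intro x hx1 hx2 hx3 hx4
    rw [hcfdef, Function.update_of_ne hx4, hc₃def, Function.update_of_ne hx3,
      hc₂def, Function.update_of_ne hx2, hc₁def, Function.update_of_ne hx1, hc₀def]
    simp [hx1, hx2, hx3, hx4]
  have hcf3 : ∀ x : V, x ≠ v₂ → cf x = c₃ x := fun x hx =>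
    Function.update_of_ne hx _ _
  have hcf2 : ∀ x : V, x ≠ v₂ → x ≠ v₁ → cf x = c₂ x := by
    intro x hx hx'
    rw [hcf3 x hx, hc₃def, Function.update_of_ne hx']
  have hcf1 : ∀ x : V, x ≠ v₂ → x ≠ v₁ → x ≠ u₂ → cf x = c₁ x := by
    intro x hx hx' hx''
    rw [hcf2 x hx hx', hc₂def, Function.update_of_ne hx'']
  have hcf00 : ∀ x : V, x ≠ v₂ → x ≠ v₁ → x ≠ u₂ → x ≠ u₁ → cf x = c₀ x := by
    intro x hx hx' hx'' hx'''
    rw [hcf1 x hx hx' hx'', hc₁def, Function.update_of_ne hx''']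
  -- the main claim, with a rank to break symmetry
  set r : V → ℕ := fun x =>
    if x = v₂ then 4 else if x = v₁ then 3 else if x = u₂ then 2 else
      if x = u₁ then 1 else 0 with hrdef
  suffices H : ∀ a b : V, a ≠ b → (∃ w, G.Adj a w ∧ G.Adj b w) → r b ≤ r a →
      cf a ≠ cf b by
    intro a b hab hw
    rcases le_total (r b) (r a) with hr | hr
    · exact H a b hab hw hr
    · exact (H b a hab.symm ⟨hw.choose, hw.choose_spec.2, hw.choose_spec.1⟩ hr).symm
  have hrv₂ : r v₂ = 4 := by rw [hrdef]; simp
  have hrv₁ : r v₁ = 3 := by rw [hrdef]; simp [hne]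
  have hru₂ : r u₂ = 2 := by rw [hrdef]; simp [Ne.symm hv₂u₂, Ne.symm hv₁u₂]
  have hru₁ : r u₁ = 1 := by rw [hrdef]; simp [Ne.symm hv₂u₁, Ne.symm hv₁u₁, hu₁u₂]
  intro a b hab hw hr
  have hbCSa : b ∈ CS a := hmemCS a b hab.symm hw
  by_cases ha4 : a = v₂
  · -- a = v₂
    have hbne : b ≠ v₂ := fun hh => hab (ha4.trans hh.symm)
    have hb : c₃ b ∈ (CS v₂).image c₃ := Finset.mem_image_of_mem c₃ (ha4 ▸ hbCSa)
    rw [ha4, hcfv₂, hcf3 b hbne]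
    exact fun hh => hx₄ (hh ▸ hb)
  by_cases ha3 : a = v₁
  · -- a = v₁
    have hbv₂ : b ≠ v₂ := fun hh => by rw [ha3, hh, hrv₂, hrv₁] at hr; omega
    have hbne : b ≠ v₁ := fun hh => hab (ha3.trans hh.symm)
    have hb : c₂ b ∈ ((CS v₁) \ {v₂}).image c₂ := Finset.mem_image_of_mem c₂
      (Finset.mem_sdiff.2 ⟨ha3 ▸ hbCSa, by simpa using hbv₂⟩)
    rw [ha3, hcfv₁, hcf2 b hbv₂ hbne]
    exact fun hh => hx₃ (hh ▸ hb)
  by_cases ha2 : a = u₂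
  · -- a = u₂
    have hbv₂ : b ≠ v₂ := fun hh => by rw [ha2, hh, hrv₂, hru₂] at hr; omega
    have hbv₁ : b ≠ v₁ := fun hh => by rw [ha2, hh, hrv₁, hru₂] at hr; omega
    have hbne : b ≠ u₂ := fun hh => hab (ha2.trans hh.symm)
    have hb : c₁ b ∈ ((CS u₂) \ {v₁, v₂}).image c₁ := Finset.mem_image_of_mem c₁
      (Finset.mem_sdiff.2 ⟨ha2 ▸ hbCSa, by simp [hbv₁, hbv₂]⟩)
    rw [ha2, hcfu₂, hcf1 b hbv₂ hbv₁ hbne]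
    exact fun hh => hx₂ (hh ▸ hb)
  by_cases ha1 : a = u₁
  · -- a = u₁
    have hbv₂ : b ≠ v₂ := fun hh => by rw [ha1, hh, hrv₂, hru₁] at hr; omega
    have hbv₁ : b ≠ v₁ := fun hh => by rw [ha1, hh, hrv₁, hru₁] at hr; omega
    have hbu₂ : b ≠ u₂ := fun hh => by rw [ha1, hh, hru₂, hru₁] at hr; omega
    have hbne : b ≠ u₁ := fun hh => hab (ha1.trans hh.symm)
    have hb : c₀ b ∈ ((CS u₁) \ {u₂, v₁, v₂}).image c₀ := Finset.mem_image_of_mem c₀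
      (Finset.mem_sdiff.2 ⟨ha1 ▸ hbCSa, by simp [hbu₂, hbv₁, hbv₂]⟩)
    rw [ha1, hcfu₁, hcf00 b hbv₂ hbv₁ hbu₂ hbne]
    exact fun hh => hx₁ (hh ▸ hb)
  · -- a is not special, hence r a = 0 and b is not special either
    have hra : r a = 0 := by rw [hrdef]; simp [ha4, ha3, ha2, ha1]
    rw [hra] at hr
    have hbv₂ : b ≠ v₂ := fun hh => by rw [hh, hrv₂] at hr; omega
    have hbv₁ : b ≠ v₁ := fun hh => by rw [hh, hrv₁] at hr; omega
    have hbu₂ : b ≠ u₂ := fun hh => by rw [hh, hru₂] at hr; omega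
    have hbu₁ : b ≠ u₁ := fun hh => by rw [hh, hru₁] at hr; omega
    obtain ⟨w, haw, hbw⟩ := hw
    -- the common neighbor cannot be special
    have hwns : w ≠ u₁ ∧ w ≠ u₂ ∧ w ≠ v₁ ∧ w ≠ v₂ := by
      refine ⟨?_, ?_, ?_, ?_⟩
      · intro hh
        replace haw : G.Adj a u₁ := hh ▸ haw
        replace hbw : G.Adj b u₁ := hh ▸ hbw
        have hmem : ∀ x : V, G.Adj x u₁ → x ≠ u₂ → x ≠ v₁ →
            x ∈ ((G.neighborFinset u₁).erase u₂).erase v₁ := by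
          intro x hx hx2 hx3
          exact Finset.mem_erase.2 ⟨hx3, Finset.mem_erase.2 ⟨hx2, by simpa using hx.symm⟩⟩
        have hcard : (((G.neighborFinset u₁).erase u₂).erase v₁).card = 1 := by
          rw [Finset.card_erase_of_mem (Finset.mem_erase.2 ⟨hv₁u₂, by simpa using hadj₁⟩),
            Finset.card_erase_of_mem (by simpa using hadj),
            SimpleGraph.card_neighborFinset_eq_degree, hu₁]
        exact hab (Finset.card_le_one.1 (le_of_eq hcard) a
          (hmem a haw ha2 ha3) b (hmem b hbw hbu₂ hbv₁))
      · intro hh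
        replace haw : G.Adj a u₂ := hh ▸ haw
        replace hbw : G.Adj b u₂ := hh ▸ hbw
        have hmem : ∀ x : V, G.Adj x u₂ → x ≠ u₁ → x ≠ v₂ →
            x ∈ ((G.neighborFinset u₂).erase u₁).erase v₂ := by
          intro x hx hx2 hx3
          exact Finset.mem_erase.2 ⟨hx3, Finset.mem_erase.2 ⟨hx2, by simpa using hx.symm⟩⟩
        have hcard : (((G.neighborFinset u₂).erase u₁).erase v₂).card = 1 := by
          rw [Finset.card_erase_of_mem (Finset.mem_erase.2 ⟨hv₂u₁, by simpa using hadj₂⟩),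
            Finset.card_erase_of_mem (by simpa using hadj.symm),
            SimpleGraph.card_neighborFinset_eq_degree, hu₂]
        exact hab (Finset.card_le_one.1 (le_of_eq hcard) a
          (hmem a haw ha1 ha4) b (hmem b hbw hbu₁ hbv₂))
      · intro hh
        replace haw : G.Adj a v₁ := hh ▸ haw
        replace hbw : G.Adj b v₁ := hh ▸ hbw
        have hmem : ∀ x : V, G.Adj x v₁ → x ≠ u₁ →
            x ∈ (G.neighborFinset v₁).erase u₁ := by
          intro x hx hx2
          exact Finset.mem_erase.2 ⟨hx2, by simpa using hx.symm⟩
        have hcard : ((G.neighborFinset v₁).erase u₁).card = 1 := by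
          rw [Finset.card_erase_of_mem (by simpa using hadj₁.symm),
            SimpleGraph.card_neighborFinset_eq_degree, hv₁]
        exact hab (Finset.card_le_one.1 (le_of_eq hcard) a
          (hmem a haw ha1) b (hmem b hbw hbu₁))
      · intro hh
        replace haw : G.Adj a v₂ := hh ▸ haw
        replace hbw : G.Adj b v₂ := hh ▸ hbw
        have hmem : ∀ x : V, G.Adj x v₂ → x ≠ u₂ →
            x ∈ (G.neighborFinset v₂).erase u₂ := by
          intro x hx hx2
          exact Finset.mem_erase.2 ⟨hx2, by simpa using hx.symm⟩
        have hcard : ((G.neighborFinset v₂).erase u₂).card = 1 := by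
          rw [Finset.card_erase_of_mem (by simpa using hadj₂.symm),
            SimpleGraph.card_neighborFinset_eq_degree, hv₂]
        exact hab (Finset.card_le_one.1 (le_of_eq hcard) a
          (hmem a haw ha2) b (hmem b hbw hbu₂))
    -- now use the given coloring
    rw [hcf0 a ha1 ha2 ha3 ha4, hcf0 b hbu₁ hbu₂ hbv₁ hbv₂]
    refine hc ?_ ?_
    · intro hh
      exact hab (congrArg Subtype.val hh)
    · exact ⟨⟨w, hScompl w hwns.1 hwns.2.1 hwns.2.2.1 hwns.2.2.2⟩, haw, hbw⟩
end

section
/- Let G be a finite simple connected graph with maximum degree Δ(G) = 3 and minimum degree at least 2. Suppose G contains none of the following configurations: (i) two adjacent vertices of degree 2; (ii) a vertex of degree 3 adjacent to two vertices of degree 2; (iii) two adjacent vertices of degree 3 each of which is adjacent to some vertex of degree 2. Then the average degree of G, namely 2|E(G)|/|V(G)|, is at least 36/13. -/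
open SimpleGraph

/-- Let `G` be a finite connected graph with `Δ(G) = 3` and minimum degree at least
`2`, containing (i) no adjacent `2`-vertices, (ii) no `3`-vertex adjacent to two
`2`-vertices, and (iii) no adjacent `3`-vertices each adjacent to some `2`-vertex.
Then the average degree `2|E(G)|/|V(G)|` is at least `36/13`. -/
theorem avg_degree_ge_of_no_reducible_configs {V : Type*} [Fintype V] [DecidableEq V]
    (G : SimpleGraph V) [DecidableRel G.Adj]
    (hconn : G.Connected) (hΔ : G.maxDegree = 3) (hδ : ∀ v, 2 ≤ G.degree v)
    (h1 : ¬ ∃ u v, G.Adj u v ∧ G.degree u = 2 ∧ G.degree v = 2)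
    (h2 : ¬ ∃ u v w, G.Adj u v ∧ G.Adj u w ∧ v ≠ w ∧
      G.degree u = 3 ∧ G.degree v = 2 ∧ G.degree w = 2)
    (h3 : ¬ ∃ u₁ u₂ v₁ v₂, G.Adj u₁ u₂ ∧ G.degree u₁ = 3 ∧ G.degree u₂ = 3 ∧
      G.Adj u₁ v₁ ∧ G.degree v₁ = 2 ∧ G.Adj u₂ v₂ ∧ G.degree v₂ = 2) :
    (36 : ℚ) / 13 ≤ 2 * G.edgeFinset.card / Fintype.card V := by
  classical
  have hdeg : ∀ v, G.degree v = 2 ∨ G.degree v = 3 := by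
    intro v
    have h := G.degree_le_maxDegree v
    have h' := hδ v
    omega
  set T2 : Finset V := Finset.univ.filter (fun v => G.degree v = 2) with hT2
  set T3 : Finset V := Finset.univ.filter (fun v => G.degree v = 3) with hT3
  set Bd : Finset V := Finset.univ.filter
      (fun v => G.degree v = 3 ∧ ∃ u, G.Adj v u ∧ G.degree u = 2) with hBd
  set Gd : Finset V := Finset.univ.filter
      (fun v => G.degree v = 3 ∧ ¬ ∃ u, G.Adj v u ∧ G.degree u = 2) with hGd
  -- double counting lemma
  have swap : ∀ (A B : Finset V),
      ∑ a ∈ A, (B.filter (fun b => G.Adj a b)).card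
        = ∑ b ∈ B, (A.filter (fun a => G.Adj a b)).card := by
    intro A B
    simp_rw [Finset.card_filter]
    exact Finset.sum_comm
  -- Fact A : 2 * |T2| ≤ |Bd|
  have factA : 2 * T2.card ≤ Bd.card := by
    have hstep : ∀ v ∈ T2, (Bd.filter (fun b => G.Adj v b)).card = 2 := by
      intro v hv
      rw [hT2, Finset.mem_filter] at hv
      have hv2 : G.degree v = 2 := hv.2
      have hnb : Bd.filter (fun b => G.Adj v b) = G.neighborFinset v := by
        ext b
        simp only [hBd, Finset.mem_filter, Finset.mem_univ, true_and,
          SimpleGraph.mem_neighborFinset]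
        constructor
        · rintro ⟨_, hadj⟩; exact hadj
        · intro hadj
          refine ⟨⟨?_, v, hadj.symm, hv2⟩, hadj⟩
          rcases hdeg b with hb | hb
          · exact absurd ⟨v, b, hadj, hv2, hb⟩ h1
          · exact hb
      rw [hnb, G.card_neighborFinset_eq_degree, hv2]
    calc 2 * T2.card = ∑ _v ∈ T2, 2 := by
            rw [Finset.sum_const, smul_eq_mul, mul_comm]
      _ = ∑ v ∈ T2, (Bd.filter (fun b => G.Adj v b)).card :=
            (Finset.sum_congr rfl hstep).symm
      _ = ∑ b ∈ Bd, (T2.filter (fun v => G.Adj v b)).card := swap T2 Bd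
      _ ≤ ∑ _b ∈ Bd, 1 := by
            refine Finset.sum_le_sum ?_
            intro b hb
            rw [hBd, Finset.mem_filter] at hb
            refine Finset.card_le_one.mpr ?_
            intro v hv w hw
            simp only [hT2, Finset.mem_filter, Finset.mem_univ, true_and] at hv hw
            by_contra hne
            exact h2 ⟨b, v, w, hv.2.symm, hw.2.symm, hne, hb.2.1, hv.1, hw.1⟩
      _ = Bd.card := by simp
  -- Fact B : 2 * |Bd| ≤ 3 * |Gd|
  have factB : 2 * Bd.card ≤ 3 * Gd.card := by
    have hstep : ∀ b ∈ Bd, 2 ≤ (Gd.filter (fun g => G.Adj b g)).card := by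
      intro b hb
      rw [hBd, Finset.mem_filter] at hb
      obtain ⟨_, hb3, u0, hu0adj, hu02⟩ := hb
      have hsub : (G.neighborFinset b) \
          ((G.neighborFinset b).filter (fun x => G.degree x = 2))
          ⊆ Gd.filter (fun g => G.Adj b g) := by
        intro x hx
        rw [Finset.mem_sdiff, Finset.mem_filter] at hx
        obtain ⟨hxnb, hxnot⟩ := hx
        rw [SimpleGraph.mem_neighborFinset] at hxnb
        have hx2 : G.degree x ≠ 2 := fun h => hxnot ⟨by
          rwa [SimpleGraph.mem_neighborFinset], h⟩
        have hx3 : G.degree x = 3 := (hdeg x).resolve_left hx2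
        rw [Finset.mem_filter, hGd, Finset.mem_filter]
        refine ⟨⟨Finset.mem_univ x, hx3, ?_⟩, hxnb⟩
        rintro ⟨u, huadj, hu2⟩
        exact h3 ⟨b, x, u0, u, hxnb, hb3, hx3, hu0adj, hu02, huadj, hu2⟩
      have hone : ((G.neighborFinset b).filter (fun x => G.degree x = 2)).card ≤ 1 := by
        refine Finset.card_le_one.mpr ?_
        intro v hv w hw
        rw [Finset.mem_filter, SimpleGraph.mem_neighborFinset] at hv hw
        by_contra hne
        exact h2 ⟨b, v, w, hv.1, hw.1, hne, hb3, hv.2, hw.2⟩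
      have hcard := Finset.card_le_card hsub
      rw [Finset.card_sdiff_of_subset (Finset.filter_subset _ _)] at hcard
      rw [G.card_neighborFinset_eq_degree, hb3] at hcard
      omega
    have hup : ∀ g ∈ Gd, (Bd.filter (fun b => G.Adj b g)).card ≤ 3 := by
      intro g hg
      rw [hGd, Finset.mem_filter] at hg
      have hsub : Bd.filter (fun b => G.Adj b g) ⊆ G.neighborFinset g := by
        intro b hb
        rw [Finset.mem_filter] at hb
        rw [SimpleGraph.mem_neighborFinset]
        exact hb.2.symm
      have := Finset.card_le_card hsub
      rw [G.card_neighborFinset_eq_degree, hg.2.1] at this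
      exact this
    calc 2 * Bd.card = ∑ _b ∈ Bd, 2 := by
            rw [Finset.sum_const, smul_eq_mul, mul_comm]
      _ ≤ ∑ b ∈ Bd, (Gd.filter (fun g => G.Adj b g)).card :=
            Finset.sum_le_sum hstep
      _ = ∑ g ∈ Gd, (Bd.filter (fun b => G.Adj b g)).card := swap Bd Gd
      _ ≤ ∑ _g ∈ Gd, 3 := Finset.sum_le_sum hup
      _ = 3 * Gd.card := by rw [Finset.sum_const, smul_eq_mul, mul_comm]
  -- partitions
  have hT3neg : T3 = Finset.univ.filter (fun v => ¬ G.degree v = 2) := by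
    ext v
    simp only [hT3, Finset.mem_filter, Finset.mem_univ, true_and]
    have := hdeg v
    omega
  have hcardV : Fintype.card V = T2.card + T3.card := by
    rw [hT3neg, hT2]
    rw [Finset.card_filter_add_card_filter_not]
    exact (Finset.card_univ).symm
  have hT3part : Bd.card + Gd.card = T3.card := by
    have e1 : T3.filter (fun v => ∃ u, G.Adj v u ∧ G.degree u = 2) = Bd := by
      ext v
      simp only [hT3, hBd, Finset.mem_filter, Finset.mem_univ, true_and, and_assoc]
    have e2 : T3.filter (fun v => ¬ ∃ u, G.Adj v u ∧ G.degree u = 2) = Gd := by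
      ext v
      simp only [hT3, hGd, Finset.mem_filter, Finset.mem_univ, true_and, and_assoc]
    rw [← e1, ← e2, Finset.card_filter_add_card_filter_not]
  -- sum of degrees
  have hsum : ∑ v, G.degree v = 2 * T2.card + 3 * T3.card := by
    rw [← Finset.sum_filter_add_sum_filter_not Finset.univ (fun v => G.degree v = 2)]
    have e1 : ∑ v ∈ Finset.univ.filter (fun v => G.degree v = 2), G.degree v
        = 2 * T2.card := by
      rw [hT2]
      rw [Finset.sum_congr rfl (fun v hv => (Finset.mem_filter.mp hv).2)]
      rw [Finset.sum_const, smul_eq_mul, mul_comm]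
    have e2 : ∑ v ∈ Finset.univ.filter (fun v => ¬ G.degree v = 2), G.degree v
        = 3 * T3.card := by
      rw [← hT3neg]
      have h33 : ∀ v ∈ T3, G.degree v = 3 := by
        intro v hv; rw [hT3, Finset.mem_filter] at hv; exact hv.2
      rw [Finset.sum_congr rfl h33, Finset.sum_const, smul_eq_mul, mul_comm]
    rw [e1, e2]
  have h2E : 2 * G.edgeFinset.card = 2 * T2.card + 3 * T3.card := by
    rw [← hsum]
    exact (G.sum_degrees_eq_twice_card_edges).symm
  -- conclude
  have hn : 0 < Fintype.card V := Fintype.card_pos_iff.mpr hconn.nonempty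
  have hkey : 36 * Fintype.card V ≤ 2 * G.edgeFinset.card * 13 := by omega
  rw [div_le_div_iff₀ (by norm_num) (by exact_mod_cast hn)]
  exact_mod_cast hkey
end

section
/- Let G be a finite simple graph with maximum degree Δ = Δ(G), and suppose every proper subgraph H of G satisfies χ_i(H) ≤ Δ + 2. If G contains a vertex u of degree 3 that is adjacent to a vertex of degree 2 and whose other two neighbors x and y satisfy d(x) + d(y) ≤ Δ + 2, then χ_i(G) ≤ Δ + 2. -/
open SimpleGraph

/-- (RC4 for Lemma on `Δ ≥ 6`.)  Suppose every proper subgraph `H` of `G` satisfies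
`χᵢ(H) ≤ Δ(G) + 2`.  If `G` has a `3`-vertex `u` adjacent to a `2`-vertex and whose
other two neighbors `x, y` satisfy `d(x) + d(y) ≤ Δ(G) + 2`, then `χᵢ(G) ≤ Δ(G) + 2`. -/
theorem rc4_deg_three_vertex {V : Type*} [Fintype V] (G : SimpleGraph V)
    [DecidableRel G.Adj]
    (hmin : ∀ H : G.Subgraph, H ≠ ⊤ → injChromNum H.coe ≤ G.maxDegree + 2)
    (h : ∃ u v x y : V, G.degree u = 3 ∧ G.Adj u v ∧ G.Adj u x ∧ G.Adj u y ∧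
      v ≠ x ∧ v ≠ y ∧ x ≠ y ∧ G.degree v = 2 ∧
      G.degree x + G.degree y ≤ G.maxDegree + 2) :
    injChromNum G ≤ G.maxDegree + 2 := by
  classical
  obtain ⟨u, v, x, y, hu3, huv, hux, huy, hvx, hvy, hxy, hv2, hdeg⟩ := h
  set Δ := G.maxDegree with hΔ
  -- the proper subgraph obtained by deleting edge uv
  set H : G.Subgraph := (⊤ : G.Subgraph).deleteEdges {s(u, v)} with hH
  have hHverts : H.verts = Set.univ := by simp [hH]
  have hHadj : ∀ a b : V, H.Adj a b ↔ G.Adj a b ∧ s(a, b) ≠ s(u, v) := by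
    intro a b
    simp [hH, SimpleGraph.Subgraph.deleteEdges_adj]
  have hHne : H ≠ ⊤ := by
    intro hEq
    have h1 : H.Adj u v := by rw [hEq]; simpa using huv
    rw [hHadj] at h1
    exact h1.2 rfl
  have hchrom := hmin H hHne
  haveI : Fintype ↥H.verts := Fintype.ofFinite _
  have hne : {k | ∃ c : ↥H.verts → Fin k, IsInjColoring H.coe c}.Nonempty := by
    refine ⟨Fintype.card ↥H.verts, (Fintype.equivFin _).toFun, ?_⟩
    intro a b hab _
    exact fun hc => hab ((Fintype.equivFin _).injective hc)
  have hle : sInf {k | ∃ c : ↥H.verts → Fin k, IsInjColoring H.coe c} ≤ Δ + 2 :=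
    hchrom
  obtain ⟨c0, hc0⟩ := Nat.sInf_mem hne
  -- the base coloring on V with Δ+2 colors
  have hmemV : ∀ w : V, w ∈ H.verts := fun w => by rw [hHverts]; trivial
  set cb : V → Fin (Δ + 2) := fun w => Fin.castLE hle (c0 ⟨w, hmemV w⟩) with hcb
  have hcbase : ∀ a b : V, a ≠ b → (∃ z, H.Adj a z ∧ H.Adj b z) → cb a ≠ cb b := by
    rintro a b hab ⟨z, hz1, hz2⟩ hcc
    have hab' : (⟨a, hmemV a⟩ : ↥H.verts) ≠ ⟨b, hmemV b⟩ := by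
      simpa [Subtype.ext_iff] using hab
    have : c0 ⟨a, hmemV a⟩ ≠ c0 ⟨b, hmemV b⟩ := by
      refine hc0 hab' ⟨⟨z, hmemV z⟩, ?_, ?_⟩ <;>
        simp [SimpleGraph.Subgraph.coe_adj, hz1, hz2]
    exact this (Fin.castLE_injective hle hcc)
  -- the neighborhood of u is exactly {v, x, y}
  have hcard3 : ({v, x, y} : Finset V).card = 3 := by
    rw [Finset.card_insert_of_notMem (by simp [hvx, hvy]),
      Finset.card_insert_of_notMem (by simp [hxy]), Finset.card_singleton]
  have hNu : G.neighborFinset u = {v, x, y} := by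
    symm
    apply Finset.eq_of_subset_of_card_le
    · intro z hz
      simp only [Finset.mem_insert, Finset.mem_singleton] at hz
      rcases hz with rfl | rfl | rfl <;>
        simp [SimpleGraph.mem_neighborFinset, huv, hux, huy]
    · rw [SimpleGraph.card_neighborFinset_eq_degree, hu3, hcard3]
  -- neighborhood of v is {u, w} for some w
  have huNv : u ∈ G.neighborFinset v := by
    simp [SimpleGraph.mem_neighborFinset, huv.symm]
  have hcardNv : ((G.neighborFinset v).erase u).card = 1 := by
    rw [Finset.card_erase_of_mem huNv, SimpleGraph.card_neighborFinset_eq_degree, hv2]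
  obtain ⟨w, hw⟩ := Finset.card_eq_one.mp hcardNv
  have hNv : G.neighborFinset v = {u, w} := by
    rw [← Finset.insert_erase huNv, hw]
  have hvw : G.Adj v w := by
    rw [← SimpleGraph.mem_neighborFinset, hNv]; simp
  -- degree facts
  have hdx : 1 ≤ G.degree x := by
    rw [← SimpleGraph.card_neighborFinset_eq_degree]
    exact Finset.card_pos.mpr ⟨u, by simp [SimpleGraph.mem_neighborFinset, hux.symm]⟩
  have hdy : 1 ≤ G.degree y := by
    rw [← SimpleGraph.card_neighborFinset_eq_degree]
    exact Finset.card_pos.mpr ⟨u, by simp [SimpleGraph.mem_neighborFinset, huy.symm]⟩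
  have hdw : G.degree w ≤ Δ := G.degree_le_maxDegree w
  have hdwpos : 1 ≤ G.degree w := by
    rw [← SimpleGraph.card_neighborFinset_eq_degree]
    exact Finset.card_pos.mpr ⟨v, by simp [SimpleGraph.mem_neighborFinset, hvw.symm]⟩
  -- choose a new color for u
  set Su : Finset V :=
    Finset.univ.filter (fun b => b ≠ u ∧ ∃ z, G.Adj u z ∧ G.Adj b z) with hSu
  have hSusub : Su ⊆ ((G.neighborFinset v).erase u ∪ (G.neighborFinset x).erase u
      ∪ (G.neighborFinset y).erase u) := by
    intro b hb
    rw [hSu, Finset.mem_filter] at hb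
    obtain ⟨-, hbu, z, huz, hbz⟩ := hb
    have hz : z ∈ G.neighborFinset u := by simpa [SimpleGraph.mem_neighborFinset]
    rw [hNu] at hz
    simp only [Finset.mem_insert, Finset.mem_singleton] at hz
    have hbmem : ∀ t : V, z = t → b ∈ (G.neighborFinset t).erase u := by
      rintro t rfl
      exact Finset.mem_erase.mpr ⟨hbu, by simpa [SimpleGraph.mem_neighborFinset] using hbz.symm⟩
    rcases hz with rfl | rfl | rfl
    · exact Finset.mem_union_left _ (Finset.mem_union_left _ (hbmem _ rfl))
    · exact Finset.mem_union_left _ (Finset.mem_union_right _ (hbmem _ rfl))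
    · exact Finset.mem_union_right _ (hbmem _ rfl)
  have hSucard : Su.card ≤ Δ + 1 := by
    have h1 := Finset.card_le_card hSusub
    have h2 := Finset.card_union_le
      ((G.neighborFinset v).erase u ∪ (G.neighborFinset x).erase u)
      ((G.neighborFinset y).erase u)
    have h3 := Finset.card_union_le ((G.neighborFinset v).erase u)
      ((G.neighborFinset x).erase u)
    have e1 : ((G.neighborFinset v).erase u).card = G.degree v - 1 := by
      rw [Finset.card_erase_of_mem huNv, SimpleGraph.card_neighborFinset_eq_degree]
    have e2 : ((G.neighborFinset x).erase u).card = G.degree x - 1 := by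
      rw [Finset.card_erase_of_mem (by simp [SimpleGraph.mem_neighborFinset, hux.symm]),
        SimpleGraph.card_neighborFinset_eq_degree]
    have e3 : ((G.neighborFinset y).erase u).card = G.degree y - 1 := by
      rw [Finset.card_erase_of_mem (by simp [SimpleGraph.mem_neighborFinset, huy.symm]),
        SimpleGraph.card_neighborFinset_eq_degree]
    omega
  have hexu : ∃ a : Fin (Δ + 2), a ∉ Su.image cb := by
    by_contra hcon
    push_neg at hcon
    have hsub : (Finset.univ : Finset (Fin (Δ + 2))) ⊆ Su.image cb :=
      fun a _ => hcon a
    have := Finset.card_le_card hsub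
    have h2 := Finset.card_image_le (s := Su) (f := cb)
    simp only [Finset.card_univ, Fintype.card_fin] at this
    omega
  obtain ⟨cu, hcu⟩ := hexu
  set c1 : V → Fin (Δ + 2) := Function.update cb u cu with hc1
  -- choose a new color for v
  set Sv : Finset V :=
    Finset.univ.filter (fun b => b ≠ v ∧ ∃ z, G.Adj v z ∧ G.Adj b z) with hSv
  have hSvsub : Sv ⊆ ((G.neighborFinset u).erase v ∪ (G.neighborFinset w).erase v) := by
    intro b hb
    rw [hSv, Finset.mem_filter] at hb
    obtain ⟨-, hbv, z, hvz, hbz⟩ := hb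
    have hz : z ∈ G.neighborFinset v := by simpa [SimpleGraph.mem_neighborFinset]
    rw [hNv] at hz
    simp only [Finset.mem_insert, Finset.mem_singleton] at hz
    have hbmem : ∀ t : V, z = t → b ∈ (G.neighborFinset t).erase v := by
      rintro t rfl
      exact Finset.mem_erase.mpr ⟨hbv, by simpa [SimpleGraph.mem_neighborFinset] using hbz.symm⟩
    rcases hz with rfl | rfl
    · exact Finset.mem_union_left _ (hbmem _ rfl)
    · exact Finset.mem_union_right _ (hbmem _ rfl)
  have hSvcard : Sv.card ≤ Δ + 1 := by
    have h1 := Finset.card_le_card hSvsub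
    have h2 := Finset.card_union_le ((G.neighborFinset u).erase v)
      ((G.neighborFinset w).erase v)
    have e1 : ((G.neighborFinset u).erase v).card = G.degree u - 1 := by
      rw [Finset.card_erase_of_mem (by simp [SimpleGraph.mem_neighborFinset, huv]),
        SimpleGraph.card_neighborFinset_eq_degree]
    have e2 : ((G.neighborFinset w).erase v).card = G.degree w - 1 := by
      rw [Finset.card_erase_of_mem (by simp [SimpleGraph.mem_neighborFinset, hvw.symm]),
        SimpleGraph.card_neighborFinset_eq_degree]
    omega
  have hexv : ∃ a : Fin (Δ + 2), a ∉ Sv.image c1 := by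
    by_contra hcon
    push_neg at hcon
    have hsub : (Finset.univ : Finset (Fin (Δ + 2))) ⊆ Sv.image c1 :=
      fun a _ => hcon a
    have := Finset.card_le_card hsub
    have h2 := Finset.card_image_le (s := Sv) (f := c1)
    simp only [Finset.card_univ, Fintype.card_fin] at this
    omega
  obtain ⟨cv, hcv⟩ := hexv
  set c2 : V → Fin (Δ + 2) := Function.update c1 v cv with hc2
  -- c2 is an injective coloring of G
  have hcol : IsInjColoring G c2 := by
    rintro a b hab ⟨z, haz, hbz⟩
    have key : ∀ a' b' : V, a' ≠ b' → G.Adj a' z → G.Adj b' z →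
        (a' = v ∨ (a' = u ∧ b' ≠ v) ∨ (a' ≠ u ∧ a' ≠ v ∧ b' ≠ u ∧ b' ≠ v)) →
        c2 a' ≠ c2 b' := by
      rintro a' b' hab' haz' hbz' (hav' | ⟨hau', hbv⟩ | ⟨hau, hav, hbu, hbv⟩)
      · -- a' = v
        have hbv : b' ≠ v := fun e => hab' (by rw [hav', e])
        have h1 : c2 a' = cv := by rw [hav', hc2, Function.update_self]
        have h2 : c2 b' = c1 b' := by rw [hc2, Function.update_of_ne hbv]
        rw [h1, h2]
        intro hccc
        apply hcv
        exact Finset.mem_image.mpr ⟨b', by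
          rw [hSv, Finset.mem_filter]
          exact ⟨Finset.mem_univ _, hbv, z, hav' ▸ haz', hbz'⟩, hccc.symm⟩
      · -- a' = u, b' ≠ v
        have hbu : b' ≠ u := fun e => hab' (by rw [hau', e])
        have h1 : c2 a' = cu := by
          rw [hau', hc2, Function.update_of_ne (G.ne_of_adj huv), hc1,
            Function.update_self]
        have h2 : c2 b' = cb b' := by
          rw [hc2, Function.update_of_ne hbv, hc1, Function.update_of_ne hbu]
        rw [h1, h2]
        intro hccc
        apply hcu
        exact Finset.mem_image.mpr ⟨b', by
          rw [hSu, Finset.mem_filter]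
          exact ⟨Finset.mem_univ _, hbu, z, hau' ▸ haz', hbz'⟩, hccc.symm⟩
      · -- neither a' nor b' in {u, v}
        have h1 : c2 a' = cb a' := by
          rw [hc2, Function.update_of_ne hav, hc1, Function.update_of_ne hau]
        have h2 : c2 b' = cb b' := by
          rw [hc2, Function.update_of_ne hbv, hc1, Function.update_of_ne hbu]
        rw [h1, h2]
        apply hcbase a' b' hab'
        refine ⟨z, ?_, ?_⟩ <;> rw [hHadj]
        · refine ⟨haz', fun hs => ?_⟩
          rw [Sym2.eq_iff] at hs
          rcases hs with ⟨rfl, rfl⟩ | ⟨rfl, rfl⟩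
          · exact hau rfl
          · exact hav rfl
        · refine ⟨hbz', fun hs => ?_⟩
          rw [Sym2.eq_iff] at hs
          rcases hs with ⟨rfl, rfl⟩ | ⟨rfl, rfl⟩
          · exact hbu rfl
          · exact hbv rfl
    by_cases hav : a = v
    · exact key a b hab haz hbz (Or.inl hav)
    by_cases hbv : b = v
    · exact Ne.symm (key b a hab.symm hbz haz (Or.inl hbv))
    by_cases hau : a = u
    · exact key a b hab haz hbz (Or.inr (Or.inl ⟨hau, hbv⟩))
    by_cases hbu : b = u
    · exact Ne.symm (key b a hab.symm hbz haz (Or.inr (Or.inl ⟨hbu, hav⟩)))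
    · exact key a b hab haz hbz (Or.inr (Or.inr ⟨hau, hav, hbu, hbv⟩))
  exact Nat.sInf_le ⟨c2, hcol⟩
end

section
/- Let G be a finite simple graph with maximum degree Δ = Δ(G), and suppose every proper subgraph H of G satisfies χ_i(H) ≤ Δ + 2. If G contains a vertex u of degree 4 all four of whose neighbors have degree 2, such that for at least one of these degree-2 neighbors w, the neighbor of w other than u has degree strictly less than Δ, then χ_i(G) ≤ Δ + 2. -/
open SimpleGraph

/-- From a bound on the injective chromatic number, extract a coloring. -/
lemma exists_coloring_of_le {V : Type*} [Finite V] (G : SimpleGraph V) {k : ℕ}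
    (h : injChromNum G ≤ k) : ∃ c : V → Fin k, IsInjColoring G c := by
  classical
  have : Fintype V := Fintype.ofFinite V
  have hS : {n | ∃ c : V → Fin n, IsInjColoring G c}.Nonempty :=
    ⟨Fintype.card V, Fintype.equivFin V,
      fun a b hab _ h' => hab ((Fintype.equivFin V).injective h')⟩
  obtain ⟨c, hc⟩ := Nat.sInf_mem hS
  exact ⟨fun v => Fin.castLE h (c v),
    fun a b hab hcom h' => hc hab hcom (Fin.castLE_injective h h')⟩

/-- (RC5 for Lemma on `Δ ≥ 6`.)  Suppose every proper subgraph `H` of `G` satisfies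
`χᵢ(H) ≤ Δ(G) + 2`.  If `G` has a `4`-vertex `u` all of whose neighbors are
`2`-vertices, such that some neighbor `w` of `u` has its other neighbor `x` of
degree less than `Δ(G)`, then `χᵢ(G) ≤ Δ(G) + 2`. -/
theorem rc5_deg_four_vertex {V : Type*} [Fintype V] (G : SimpleGraph V)
    [DecidableRel G.Adj]
    (hmin : ∀ H : G.Subgraph, H ≠ ⊤ → injChromNum H.coe ≤ G.maxDegree + 2)
    (h : ∃ u : V, G.degree u = 4 ∧ (∀ w, G.Adj u w → G.degree w = 2) ∧
      ∃ w x, G.Adj u w ∧ G.Adj w x ∧ x ≠ u ∧ G.degree x < G.maxDegree) :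
    injChromNum G ≤ G.maxDegree + 2 := by
  classical
  obtain ⟨u, hdeg4, hnbr2, w, x, huw, hwx, hxu, hxD⟩ := h
  set D := G.maxDegree with hD
  have hD4 : 4 ≤ D := hdeg4 ▸ G.degree_le_maxDegree u
  have huw' : u ≠ w := huw.ne
  have hwx' : w ≠ x := hwx.ne
  -- the proper subgraph obtained by deleting the edge w-x
  set H : G.Subgraph := (⊤ : G.Subgraph).deleteEdges {s(w, x)} with hHdef
  have hHadj : ∀ a b : V, H.Adj a b ↔ G.Adj a b ∧ ¬ s(a, b) = s(w, x) := by
    intro a b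
    simp [hHdef, Subgraph.deleteEdges_adj]
  have hHne : H ≠ ⊤ := by
    intro hEq
    have : H.Adj w x := hEq ▸ (Subgraph.top_adj).2 hwx
    rw [hHadj] at this
    exact this.2 rfl
  have hverts : H.verts = Set.univ := by
    simp [hHdef]
  obtain ⟨c, hc⟩ := exists_coloring_of_le H.coe (hmin H hHne)
  -- pull the coloring back to V
  set c0 : V → Fin (D + 2) := fun v => c ⟨v, by rw [hverts]; exact Set.mem_univ v⟩ with hc0def
  have hc0 : ∀ a b : V, a ≠ b → (∃ m, H.Adj a m ∧ H.Adj b m) → c0 a ≠ c0 b := by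
    intro a b hab ⟨m, ham, hbm⟩
    have hmem : m ∈ H.verts := by rw [hverts]; exact Set.mem_univ m
    exact hc (fun h' => hab (congrArg Subtype.val h'))
      ⟨⟨m, hmem⟩, by simpa using ham, by simpa using hbm⟩
  -- neighbors of w are exactly u and x
  have hNw : ∀ z, G.Adj w z → z = u ∨ z = x := by
    intro z hz
    have hdw : G.degree w = 2 := hnbr2 w huw
    have hsub : ({u, x} : Finset V) ⊆ G.neighborFinset w := by
      intro y hy
      rcases Finset.mem_insert.1 hy with h1 | h1
      · rw [h1]; exact (mem_neighborFinset G w u).2 huw.symm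
      · rw [Finset.mem_singleton] at h1; rw [h1]
        exact (mem_neighborFinset G w x).2 hwx
    have hcard : (G.neighborFinset w).card ≤ ({u, x} : Finset V).card := by
      rw [card_neighborFinset_eq_degree, hdw, Finset.card_insert_of_notMem (by
        simp [Ne.symm hxu]), Finset.card_singleton]
    have heq := Finset.eq_of_subset_of_card_le hsub hcard
    have : z ∈ ({u, x} : Finset V) := by
      rw [heq]; exact (mem_neighborFinset G w z).2 hz
    simpa using this
  -- choose a fresh color for u
  set A : Finset V := (G.neighborFinset u).biUnion
      (fun n => G.neighborFinset n \ {u}) with hAdef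
  have hAcard : A.card ≤ 4 := by
    calc A.card ≤ ∑ n ∈ G.neighborFinset u, (G.neighborFinset n \ {u}).card :=
          Finset.card_biUnion_le
      _ ≤ ∑ _n ∈ G.neighborFinset u, 1 := by
          apply Finset.sum_le_sum
          intro n hn
          have hadj : G.Adj u n := (mem_neighborFinset G u n).1 hn
          have h2 : (G.neighborFinset n).card = 2 := by
            rw [card_neighborFinset_eq_degree]; exact hnbr2 n hadj
          have hu : u ∈ G.neighborFinset n := (mem_neighborFinset G n u).2 hadj.symm
          rw [Finset.card_sdiff_of_subset (by simpa using hu), h2, Finset.card_singleton]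
      _ = 4 := by rw [Finset.sum_const, smul_eq_mul, mul_one,
            card_neighborFinset_eq_degree, hdeg4]
  have hcuEx : ∃ cu : Fin (D + 2), cu ∉ A.image c0 := by
    have hlt : (A.image c0).card < Fintype.card (Fin (D + 2)) := by
      rw [Fintype.card_fin]
      have := Finset.card_image_le (s := A) (f := c0)
      omega
    obtain ⟨cu, hcu⟩ := Finset.card_pos.1 (by
      rw [Finset.card_compl]; omega : (0 : ℕ) < (A.image c0)ᶜ.card)
    exact ⟨cu, Finset.mem_compl.1 hcu⟩
  obtain ⟨cu, hcu⟩ := hcuEx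
  set c1 : V → Fin (D + 2) := Function.update c0 u cu with hc1def
  -- choose a fresh color for w
  set B : Finset V := (G.neighborFinset u \ {w}) ∪ (G.neighborFinset x \ {w}) with hBdef
  have hBcard : B.card ≤ D + 1 := by
    have h1 : (G.neighborFinset u \ {w}).card = 3 := by
      rw [Finset.card_sdiff_of_subset (by simpa using (mem_neighborFinset G u w).2 huw),
        card_neighborFinset_eq_degree, hdeg4, Finset.card_singleton]
    have h2 : (G.neighborFinset x \ {w}).card = G.degree x - 1 := by
      rw [Finset.card_sdiff_of_subset (by simpa using (mem_neighborFinset G x w).2 hwx.symm),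
        card_neighborFinset_eq_degree, Finset.card_singleton]
    calc B.card ≤ (G.neighborFinset u \ {w}).card + (G.neighborFinset x \ {w}).card :=
          Finset.card_union_le _ _
      _ ≤ D + 1 := by rw [h1, h2]; omega
  have hcwEx : ∃ cw : Fin (D + 2), cw ∉ B.image c1 := by
    have hlt : (B.image c1).card < Fintype.card (Fin (D + 2)) := by
      rw [Fintype.card_fin]
      have := Finset.card_image_le (s := B) (f := c1)
      omega
    obtain ⟨cw, hcw⟩ := Finset.card_pos.1 (by
      rw [Finset.card_compl]; omega : (0 : ℕ) < (B.image c1)ᶜ.card)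
    exact ⟨cw, Finset.mem_compl.1 hcw⟩
  obtain ⟨cw, hcw⟩ := hcwEx
  set c2 : V → Fin (D + 2) := Function.update c1 w cw with hc2def
  have hc2w : c2 w = cw := Function.update_self w cw c1
  have hc2ne : ∀ v, v ≠ w → c2 v = c1 v := fun v hv => Function.update_of_ne hv cw c1
  have hc1u : c1 u = cu := Function.update_self u cu c0
  have hc1ne : ∀ v, v ≠ u → c1 v = c0 v := fun v hv => Function.update_of_ne hv cu c0
  -- key claims
  have claim_w : ∀ a, a ≠ w → (∃ m, G.Adj a m ∧ G.Adj w m) → c2 a ≠ c2 w := by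
    intro a haw ⟨m, ham, hwm⟩
    rcases hNw m hwm with hm | hm
    · have haB : a ∈ B := Finset.mem_union_left _ (by
        simp only [Finset.mem_sdiff, Finset.mem_singleton]
        exact ⟨(mem_neighborFinset G u a).2 (hm ▸ ham).symm, haw⟩)
      have : c1 a ∈ B.image c1 := Finset.mem_image_of_mem c1 haB
      rw [hc2w, hc2ne a haw]
      exact fun hEq => hcw (hEq ▸ this)
    · have haB : a ∈ B := Finset.mem_union_right _ (by
        simp only [Finset.mem_sdiff, Finset.mem_singleton]
        exact ⟨(mem_neighborFinset G x a).2 (hm ▸ ham).symm, haw⟩)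
      have : c1 a ∈ B.image c1 := Finset.mem_image_of_mem c1 haB
      rw [hc2w, hc2ne a haw]
      exact fun hEq => hcw (hEq ▸ this)
  have claim_u : ∀ a, a ≠ u → a ≠ w → (∃ m, G.Adj a m ∧ G.Adj u m) → c2 a ≠ c2 u := by
    intro a hau haw ⟨m, ham, hum⟩
    have haA : a ∈ A := Finset.mem_biUnion.2 ⟨m, (mem_neighborFinset G u m).2 hum, by
      simp only [Finset.mem_sdiff, Finset.mem_singleton]
      exact ⟨(mem_neighborFinset G m a).2 ham.symm, hau⟩⟩
    have : c0 a ∈ A.image c0 := Finset.mem_image_of_mem c0 haA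
    rw [hc2ne a haw, hc1ne a hau, hc2ne u huw', hc1u]
    exact fun hEq => hcu (hEq ▸ this)
  -- the final coloring is injective
  have hinj : IsInjColoring G c2 := by
    intro a b hab ⟨m, ham, hbm⟩
    by_cases haw : a = w
    · subst haw
      exact (claim_w b (Ne.symm hab) ⟨m, hbm, ham⟩).symm
    by_cases hbw : b = w
    · subst hbw
      exact claim_w a hab ⟨m, ham, hbm⟩
    by_cases hau : a = u
    · subst hau
      exact (claim_u b (Ne.symm hab) hbw ⟨m, hbm, ham⟩).symm
    by_cases hbu : b = u
    · subst hbu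
      exact claim_u a hab haw ⟨m, ham, hbm⟩
    -- main case: a, b ∉ {u, w}; the common neighbor m is not w
    have hmw : m ≠ w := by
      intro hm; subst hm
      rcases hNw a ham.symm with h1 | h1
      · exact hau h1
      rcases hNw b hbm.symm with h2 | h2
      · exact hbu h2
      exact hab (h1.trans h2.symm)
    have hH : ∀ z, z ≠ w → G.Adj z m → H.Adj z m := by
      intro z hzw hz
      rw [hHadj]
      refine ⟨hz, ?_⟩
      rw [Sym2.eq_iff]
      rintro (⟨h1, h2⟩ | ⟨h1, h2⟩)
      · exact hzw h1
      · exact hmw h2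
    have := hc0 a b hab ⟨m, hH a haw ham, hH b hbw hbm⟩
    rwa [hc2ne a haw, hc1ne a hau, hc2ne b hbw, hc1ne b hbu]
  exact Nat.sInf_le ⟨c2, hinj⟩
end

section
/- Let G be a finite simple connected graph with maximum degree Δ = Δ(G) ≥ 6 and minimum degree at least 2. Suppose G contains none of the following configurations: (i) two adjacent vertices of degree 2; (ii) a vertex of degree 3 adjacent to two or more vertices of degree 2; (iii) a vertex of degree 3 adjacent to a vertex of degree 2 and to two other neighbors x and y with d(x) + d(y) ≤ Δ + 2; (iv) a vertex of degree 4 adjacent to four vertices of degree 2 such that one of these degree-2 vertices has its other neighbor of degree strictly less than Δ. Then the average degree of G, namely 2|E(G)|/|V(G)|, is at least 14/5. -/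
open SimpleGraph Finset
open scoped Classical
set_option linter.unusedSectionVars false

section Aux
variable {V : Type*} [Fintype V] [DecidableEq V] (G : SimpleGraph V) [DecidableRel G.Adj]

/-- totally bad 4-vertex -/
def TB (u : V) : Prop := G.degree u = 4 ∧ ∀ w, G.Adj u w → G.degree w = 2

/-- charge sent from `u` to `v` -/
noncomputable def chg (u v : V) : ℚ :=
  if G.Adj u v then
    if G.degree v = 2 then
      if TB G u then 3/10
      else if 6 ≤ G.degree u ∧ ∃ t, G.Adj v t ∧ TB G t then 1/2
      else 2/5
    else if G.degree v = 3 ∧ 5 ≤ G.degree u then 1/5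
    else 0
  else 0

variable {G}

lemma chg_nonneg (u v : V) : 0 ≤ chg G u v := by
  unfold chg; split_ifs <;> norm_num

lemma chg_le_half (u v : V) : chg G u v ≤ 1/2 := by
  unfold chg; split_ifs <;> norm_num

lemma chg_not_adj {u v : V} (h : ¬ G.Adj u v) : chg G u v = 0 := by
  unfold chg; rw [if_neg h]

lemma chg_le_two_fifth {u : V} (h : G.degree u ≤ 5) (v : V) : chg G u v ≤ 2/5 := by
  unfold chg
  split_ifs with hA hB _ hD _
  any_goals norm_num
  exact absurd hD.1 (by omega)

lemma chg_eq_zero_of_small {u v : V} (h : G.degree u ≤ 4) (hv : G.degree v ≠ 2) :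
    chg G u v = 0 := by
  unfold chg
  split_ifs with hA hB hC hD hE
  any_goals rfl
  all_goals
    first
      | exact absurd ‹G.degree v = 2› hv
      | exact absurd (And.right ‹G.degree v = 3 ∧ 5 ≤ G.degree u›) (by omega)

lemma chg_to2_TB {u v : V} (ha : G.Adj u v) (hv : G.degree v = 2) (htb : TB G u) :
    chg G u v = 3/10 := by
  unfold chg; rw [if_pos ha, if_pos hv, if_pos htb]

lemma chg_to2_big {u v : V} (ha : G.Adj u v) (hv : G.degree v = 2) (h6 : 6 ≤ G.degree u)
    (ht : ∃ t, G.Adj v t ∧ TB G t) : chg G u v = 1/2 := by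
  have htb : ¬ TB G u := fun h => absurd h.1 (by omega)
  unfold chg; rw [if_pos ha, if_pos hv, if_neg htb, if_pos ⟨h6, ht⟩]

lemma chg_to2_normal {u v : V} (ha : G.Adj u v) (hv : G.degree v = 2) (htb : ¬ TB G u)
    (ht : ¬ ∃ t, G.Adj v t ∧ TB G t) : chg G u v = 2/5 := by
  unfold chg
  rw [if_pos ha, if_pos hv, if_neg htb, if_neg (fun h => ht h.2)]

lemma chg_to3 {u v : V} (ha : G.Adj u v) (hv : G.degree v = 3) (h5 : 5 ≤ G.degree u) :
    chg G u v = 1/5 := by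
  unfold chg
  rw [if_pos ha, if_neg (by omega), if_pos ⟨hv, h5⟩]

lemma sum_chg_from (u : V) :
    ∑ v, chg G u v = ∑ v ∈ G.neighborFinset u, chg G u v := by
  refine (Finset.sum_subset (subset_univ _) fun v _ hv => ?_).symm
  exact chg_not_adj (fun h => hv ((mem_neighborFinset G u v).2 h))

lemma sum_chg_to (u : V) :
    ∑ v, chg G v u = ∑ v ∈ G.neighborFinset u, chg G v u := by
  refine (Finset.sum_subset (subset_univ _) fun v _ hv => ?_).symm
  exact chg_not_adj (fun h => hv ((mem_neighborFinset G u v).2 h.symm))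

end Aux

section Main
variable {V : Type*} [Fintype V] [DecidableEq V] {G : SimpleGraph V} [DecidableRel G.Adj]

lemma recv2 (hΔ : 6 ≤ G.maxDegree)
    (h4 : ¬ ∃ u, G.degree u = 4 ∧ (∀ w, G.Adj u w → G.degree w = 2) ∧
      ∃ w x, G.Adj u w ∧ G.Adj w x ∧ x ≠ u ∧ G.degree x < G.maxDegree)
    {u : V} (hu : G.degree u = 2) : 4/5 ≤ ∑ v, chg G v u := by
  obtain ⟨a, b, hab, hs⟩ : ∃ a b : V, a ≠ b ∧ G.neighborFinset u = {a, b} :=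
    card_eq_two.mp (by rw [card_neighborFinset_eq_degree]; exact hu)
  have ha : G.Adj u a := by rw [← mem_neighborFinset, hs]; simp
  have hb : G.Adj u b := by rw [← mem_neighborFinset, hs]; simp
  have hmem : ∀ t, G.Adj u t → t = a ∨ t = b := fun t ht => by
    have h := (mem_neighborFinset G u t).2 ht
    rw [hs] at h; simpa using h
  have main : 4/5 ≤ chg G a u + chg G b u := by
    have HTB : ∀ x y : V, G.Adj u x → G.Adj u y → x ≠ y → TB G x →
        chg G x u + chg G y u = 4/5 := by
      intro x y hx hy hxy htb
      have hylarge : G.maxDegree ≤ G.degree y := by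
        by_contra hlt
        exact h4 ⟨x, htb.1, htb.2, u, y, hx.symm, hy, hxy.symm, by omega⟩
      have h6 : 6 ≤ G.degree y := le_trans hΔ hylarge
      rw [chg_to2_TB hx.symm hu htb, chg_to2_big hy.symm hu h6 ⟨x, hx, htb⟩]
      norm_num
    by_cases hta : TB G a
    · linarith [HTB a b ha hb hab hta]
    · by_cases htb2 : TB G b
      · linarith [HTB b a hb ha hab.symm htb2]
      · have hna : ¬ ∃ t, G.Adj u t ∧ TB G t := by
          rintro ⟨t, ht, htt⟩
          rcases hmem t ht with rfl | rfl
          exacts [hta htt, htb2 htt]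
        rw [chg_to2_normal ha.symm hu hta hna, chg_to2_normal hb.symm hu htb2 hna]
        norm_num
  calc (4:ℚ)/5 ≤ chg G a u + chg G b u := main
    _ = ∑ v ∈ ({a, b} : Finset V), chg G v u := (sum_pair (f := fun v => chg G v u) hab).symm
    _ ≤ ∑ v, chg G v u :=
        sum_le_sum_of_subset_of_nonneg (subset_univ _) fun i _ _ => chg_nonneg _ _

lemma recv3 (hΔ : 6 ≤ G.maxDegree)
    (h3 : ¬ ∃ u v x y, G.degree u = 3 ∧ G.Adj u v ∧ G.Adj u x ∧ G.Adj u y ∧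
      v ≠ x ∧ v ≠ y ∧ x ≠ y ∧ G.degree v = 2 ∧
      G.degree x + G.degree y ≤ G.maxDegree + 2)
    {u v0 : V} (hu : G.degree u = 3) (hv0 : G.Adj u v0) (hv02 : G.degree v0 = 2) :
    1/5 ≤ ∑ v, chg G v u := by
  have hcard : (G.neighborFinset u \ {v0}).card = 2 := by
    rw [card_sdiff_of_subset (by simp [hv0]), card_neighborFinset_eq_degree, hu]
    simp
  obtain ⟨x, y, hxy, hs⟩ := card_eq_two.mp hcard
  have hx : x ∈ G.neighborFinset u \ {v0} := by rw [hs]; simp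
  have hy : y ∈ G.neighborFinset u \ {v0} := by rw [hs]; simp
  rw [mem_sdiff, mem_neighborFinset, mem_singleton] at hx hy
  obtain ⟨hxadj, hxne⟩ := hx
  obtain ⟨hyadj, hyne⟩ := hy
  have hbig : ¬ (G.degree x + G.degree y ≤ G.maxDegree + 2) := fun hle =>
    h3 ⟨u, v0, x, y, hu, hv0, hxadj, hyadj, fun hh => hxne hh.symm,
      fun hh => hyne hh.symm, hxy, hv02, hle⟩
  have hor : 5 ≤ G.degree x ∨ 5 ≤ G.degree y := by omega
  rcases hor with h5 | h5
  · calc (1:ℚ)/5 = chg G x u := (chg_to3 hxadj.symm hu h5).symm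
      _ ≤ ∑ v, chg G v u :=
          single_le_sum (fun i _ => chg_nonneg (G := G) i u) (mem_univ x)
  · calc (1:ℚ)/5 = chg G y u := (chg_to3 hyadj.symm hu h5).symm
      _ ≤ ∑ v, chg G v u :=
          single_le_sum (fun i _ => chg_nonneg (G := G) i u) (mem_univ y)

lemma send2 (h1 : ¬ ∃ u v, G.Adj u v ∧ G.degree u = 2 ∧ G.degree v = 2) {u : V} (hu : G.degree u = 2) : ∑ v, chg G u v ≤ 0 := by
  rw [sum_chg_from]
  refine sum_nonpos fun v hv => ?_
  rw [mem_neighborFinset] at hv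
  have hne : G.degree v ≠ 2 := fun h => h1 ⟨u, v, hv, hu, h⟩
  rw [chg_eq_zero_of_small (by omega) hne]

lemma send3 (h2 : ¬ ∃ u v w, G.Adj u v ∧ G.Adj u w ∧ v ≠ w ∧
      G.degree u = 3 ∧ G.degree v = 2 ∧ G.degree w = 2) {u : V} (hu : G.degree u = 3) : ∑ v, chg G u v ≤ 2/5 := by
  rw [sum_chg_from]
  have hpt : ∀ v ∈ G.neighborFinset u,
      chg G u v ≤ if G.degree v = 2 then (2:ℚ)/5 else 0 := by
    intro v _
    by_cases h : G.degree v = 2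
    · rw [if_pos h]; exact chg_le_two_fifth (by omega) v
    · rw [if_neg h, chg_eq_zero_of_small (by omega) h]
  have hc1 : ((G.neighborFinset u).filter (fun v => G.degree v = 2)).card ≤ 1 := by
    by_contra hcon
    rw [not_le] at hcon
    obtain ⟨a, haf, b, hbf, hab⟩ := Finset.one_lt_card.mp hcon
    rw [mem_filter, mem_neighborFinset] at haf hbf
    exact h2 ⟨u, a, b, haf.1, hbf.1, hab, hu, haf.2, hbf.2⟩
  calc ∑ v ∈ G.neighborFinset u, chg G u v
      ≤ ∑ v ∈ G.neighborFinset u, if G.degree v = 2 then (2:ℚ)/5 else 0 := sum_le_sum hpt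
    _ = ∑ v ∈ (G.neighborFinset u).filter (fun v => G.degree v = 2), (2:ℚ)/5 :=
        (sum_filter _ _).symm
    _ = ((G.neighborFinset u).filter (fun v => G.degree v = 2)).card • ((2:ℚ)/5) :=
        sum_const _
    _ ≤ 1 * ((2:ℚ)/5) := by
        rw [nsmul_eq_mul]
        have : ((((G.neighborFinset u).filter (fun v => G.degree v = 2)).card : ℚ)) ≤ 1 := by
          exact_mod_cast hc1
        nlinarith
    _ = 2/5 := by norm_num

lemma send4TB {u : V} (hu : G.degree u = 4) (htb : TB G u) : ∑ v, chg G u v ≤ 6/5 := by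
  rw [sum_chg_from]
  have heach : ∀ v ∈ G.neighborFinset u, chg G u v = 3/10 := by
    intro v hv
    rw [mem_neighborFinset] at hv
    exact chg_to2_TB hv (htb.2 v hv) htb
  rw [sum_congr rfl heach, sum_const, card_neighborFinset_eq_degree, hu]
  norm_num

lemma send4 {u : V} (hu : G.degree u = 4) (hntb : ¬ TB G u) : ∑ v, chg G u v ≤ 6/5 := by
  rw [sum_chg_from]
  have hpt : ∀ v ∈ G.neighborFinset u,
      chg G u v ≤ if G.degree v = 2 then (2:ℚ)/5 else 0 := by
    intro v _
    by_cases h : G.degree v = 2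
    · rw [if_pos h]; exact chg_le_two_fifth (by omega) v
    · rw [if_neg h, chg_eq_zero_of_small (by omega) h]
  obtain ⟨w, hw, hw2⟩ : ∃ w, G.Adj u w ∧ G.degree w ≠ 2 := by
    by_contra hc
    push_neg at hc
    exact hntb ⟨hu, fun w hh => hc w hh⟩
  have hc3 : ((G.neighborFinset u).filter (fun v => G.degree v = 2)).card ≤ 3 := by
    have hss : (G.neighborFinset u).filter (fun v => G.degree v = 2) ⊂ G.neighborFinset u := by
      exact (Finset.ssubset_iff_of_subset (filter_subset _ _)).2
        ⟨w, (mem_neighborFinset G u w).2 hw, fun hmem => hw2 (mem_filter.mp hmem).2⟩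
    have := Finset.card_lt_card hss
    rw [card_neighborFinset_eq_degree, hu] at this
    omega
  calc ∑ v ∈ G.neighborFinset u, chg G u v
      ≤ ∑ v ∈ G.neighborFinset u, if G.degree v = 2 then (2:ℚ)/5 else 0 := sum_le_sum hpt
    _ = ∑ v ∈ (G.neighborFinset u).filter (fun v => G.degree v = 2), (2:ℚ)/5 :=
        (sum_filter _ _).symm
    _ = ((G.neighborFinset u).filter (fun v => G.degree v = 2)).card • ((2:ℚ)/5) :=
        sum_const _
    _ ≤ 3 * ((2:ℚ)/5) := by
        rw [nsmul_eq_mul]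
        have : ((((G.neighborFinset u).filter (fun v => G.degree v = 2)).card : ℚ)) ≤ 3 := by
          exact_mod_cast hc3
        nlinarith
    _ = 6/5 := by norm_num

lemma send5 {u : V} (hu : G.degree u = 5) : ∑ v, chg G u v ≤ 2 := by
  rw [sum_chg_from]
  calc ∑ v ∈ G.neighborFinset u, chg G u v
      ≤ ∑ _v ∈ G.neighborFinset u, (2:ℚ)/5 :=
        sum_le_sum fun v _ => chg_le_two_fifth (by omega) v
    _ = (G.neighborFinset u).card • ((2:ℚ)/5) := sum_const _
    _ = 2 := by rw [card_neighborFinset_eq_degree, hu]; norm_num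

lemma send6 {u : V} : ∑ v, chg G u v ≤ (G.degree u : ℚ)/2 := by
  rw [sum_chg_from]
  calc ∑ v ∈ G.neighborFinset u, chg G u v
      ≤ ∑ _v ∈ G.neighborFinset u, (1:ℚ)/2 := sum_le_sum fun v _ => chg_le_half u v
    _ = (G.neighborFinset u).card • ((1:ℚ)/2) := sum_const _
    _ = (G.degree u : ℚ)/2 := by
        rw [card_neighborFinset_eq_degree, nsmul_eq_mul]; ring

lemma keylem (hΔ : 6 ≤ G.maxDegree) (hδ : ∀ v, 2 ≤ G.degree v)
    (h1 : ¬ ∃ u v, G.Adj u v ∧ G.degree u = 2 ∧ G.degree v = 2)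
    (h2 : ¬ ∃ u v w, G.Adj u v ∧ G.Adj u w ∧ v ≠ w ∧
      G.degree u = 3 ∧ G.degree v = 2 ∧ G.degree w = 2)
    (h3 : ¬ ∃ u v x y, G.degree u = 3 ∧ G.Adj u v ∧ G.Adj u x ∧ G.Adj u y ∧
      v ≠ x ∧ v ≠ y ∧ x ≠ y ∧ G.degree v = 2 ∧
      G.degree x + G.degree y ≤ G.maxDegree + 2)
    (h4 : ¬ ∃ u, G.degree u = 4 ∧ (∀ w, G.Adj u w → G.degree w = 2) ∧
      ∃ w x, G.Adj u w ∧ G.Adj w x ∧ x ≠ u ∧ G.degree x < G.maxDegree)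
    (u : V) :
    (14:ℚ)/5 ≤ (G.degree u : ℚ) - ∑ v, chg G u v + ∑ v, chg G v u := by
  have hR0 : 0 ≤ ∑ v, chg G v u := sum_nonneg fun v _ => chg_nonneg v u
  have hd := hδ u
  rcases (by omega :
      G.degree u = 2 ∨ G.degree u = 3 ∨ G.degree u = 4 ∨ G.degree u = 5 ∨ 6 ≤ G.degree u)
    with h | h | h | h | h
  · have hr := recv2 hΔ h4 h
    have hsend := send2 h1 h
    rw [h]; push_cast; linarith
  · by_cases hex : ∃ v, G.Adj u v ∧ G.degree v = 2
    · obtain ⟨v0, hv0, hv02⟩ := hex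
      have hr := recv3 hΔ h3 h hv0 hv02
      have hsend := send3 h2 h
      rw [h]; push_cast; linarith
    · have hsend : ∑ v, chg G u v ≤ 0 := by
        rw [sum_chg_from]
        refine sum_nonpos fun v hv => ?_
        rw [mem_neighborFinset] at hv
        have hne : G.degree v ≠ 2 := fun hh => hex ⟨v, hv, hh⟩
        rw [chg_eq_zero_of_small (by omega) hne]
      rw [h]; push_cast; linarith
  · by_cases htb : TB G u
    · have hsend := send4TB h htb
      rw [h]; push_cast; linarith
    · have hsend := send4 h htb
      rw [h]; push_cast; linarith
  · have hsend := send5 h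
    rw [h]; push_cast; linarith
  · have hsend := send6 (G := G) (u := u)
    have h6 : (6:ℚ) ≤ (G.degree u : ℚ) := by exact_mod_cast h
    linarith

end Main

/-- Let `G` be a finite connected graph with `Δ(G) ≥ 6` and minimum degree at least
`2`, containing (i) no adjacent `2`-vertices, (ii) no `3`-vertex adjacent to two or
more `2`-vertices, (iii) no `3`-vertex adjacent to a `2`-vertex and to two other
neighbors `x, y` with `d(x) + d(y) ≤ Δ + 2`, and (iv) no `4`-vertex adjacent to four
`2`-vertices one of which has its other neighbor of degree less than `Δ`.  Then the
average degree `2|E(G)|/|V(G)|` is at least `14/5`. -/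
theorem avg_degree_ge_of_no_reducible_configs_maxDegree_ge_six {V : Type*}
    [Fintype V] [DecidableEq V] (G : SimpleGraph V) [DecidableRel G.Adj]
    (hconn : G.Connected) (hΔ : 6 ≤ G.maxDegree) (hδ : ∀ v, 2 ≤ G.degree v)
    (h1 : ¬ ∃ u v, G.Adj u v ∧ G.degree u = 2 ∧ G.degree v = 2)
    (h2 : ¬ ∃ u v w, G.Adj u v ∧ G.Adj u w ∧ v ≠ w ∧
      G.degree u = 3 ∧ G.degree v = 2 ∧ G.degree w = 2)
    (h3 : ¬ ∃ u v x y, G.degree u = 3 ∧ G.Adj u v ∧ G.Adj u x ∧ G.Adj u y ∧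
      v ≠ x ∧ v ≠ y ∧ x ≠ y ∧ G.degree v = 2 ∧
      G.degree x + G.degree y ≤ G.maxDegree + 2)
    (h4 : ¬ ∃ u, G.degree u = 4 ∧ (∀ w, G.Adj u w → G.degree w = 2) ∧
      ∃ w x, G.Adj u w ∧ G.Adj w x ∧ x ≠ u ∧ G.degree x < G.maxDegree) :
    (14 : ℚ) / 5 ≤ 2 * G.edgeFinset.card / Fintype.card V := by
  have hne : Nonempty V := hconn.nonempty
  have hn0 : 0 < Fintype.card V := Fintype.card_pos
  have hnQ : (0:ℚ) < Fintype.card V := by exact_mod_cast hn0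
  rw [le_div_iff₀ hnQ]
  have hsum : (14:ℚ)/5 * Fintype.card V ≤
      ∑ u, ((G.degree u : ℚ) - ∑ v, chg G u v + ∑ v, chg G v u) := by
    calc (14:ℚ)/5 * Fintype.card V = ∑ _u : V, (14:ℚ)/5 := by
          rw [sum_const, card_univ, nsmul_eq_mul]; ring
      _ ≤ _ := sum_le_sum fun u _ => keylem hΔ hδ h1 h2 h3 h4 u
  have hswap : ∑ u : V, ∑ v : V, chg G u v = ∑ u : V, ∑ v : V, chg G v u :=
    Finset.sum_comm
  rw [Finset.sum_add_distrib, Finset.sum_sub_distrib, hswap] at hsum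
  have hdeg : ∑ u : V, (G.degree u : ℚ) = 2 * G.edgeFinset.card := by
    have h := G.sum_degrees_eq_twice_card_edges
    have h' := congrArg (fun n : ℕ => (n : ℚ)) h
    push_cast at h'
    simpa using h'
  linarith
end

section
/- Let G be a finite simple graph with maximum degree Δ(G) = 4, and suppose every proper subgraph H of G satisfies χ_i(H) ≤ 6. If G contains a vertex of degree 3 that is adjacent to one vertex of degree 2 and to two vertices of degree 3, then χ_i(G) ≤ 6. -/
open SimpleGraph

/-!
Delete the edge `uv` and injectively 6-color the rest by minimality. Only `u` and `v` can be
in conflict in `G`, so recolor them one after the other. The vertex `u` conflicts with at most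
`(2-1) + (3-1) + (3-1) = 5` vertices (through `v`, `x`, `y`), and `v` with at most
`(3-1) + (4-1) = 5` (through `u` and its other neighbor, whose degree is at most `Δ = 4`),
so a sixth color is always free.
-/

open Finset

section InjectiveColoring

variable {V α : Type*}

lemma IsInjColoring.comp_injective {G : SimpleGraph V} {c : V → α} {β : Type*} {f : α → β}
    (hc : IsInjColoring G c) (hf : f.Injective) : IsInjColoring G (f ∘ c) :=
  fun _ _ hab hw hfc => hc hab hw (hf hfc)

lemma isInjColoring_of_injective (G : SimpleGraph V) {c : V → α} (hc : c.Injective) :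
    IsInjColoring G c :=
  fun _ _ hab _ hcab => hab (hc hcab)

lemma injChromNum_le_of_isInjColoring {G : SimpleGraph V} {k : ℕ} {c : V → Fin k}
    (hc : IsInjColoring G c) : injChromNum G ≤ k :=
  Nat.sInf_le ⟨c, hc⟩

lemma exists_isInjColoring_of_injChromNum_le [Finite V] {G : SimpleGraph V} {k : ℕ}
    (h : injChromNum G ≤ k) : ∃ c : V → Fin k, IsInjColoring G c := by
  have := Fintype.ofFinite V
  obtain ⟨c, hc⟩ := Nat.sInf_mem (s := {k | ∃ c : V → Fin k, IsInjColoring G c})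
    ⟨_, _, isInjColoring_of_injective G (Fintype.equivFin V).injective⟩
  exact ⟨Fin.castLE h ∘ c, hc.comp_injective (Fin.castLE_injective h)⟩

lemma IsInjColoring.spanningCoe {G : SimpleGraph V} {H : G.Subgraph} (hH : H.IsSpanning)
    {c : H.verts → α} (hc : IsInjColoring H.coe c) :
    IsInjColoring H.spanningCoe fun a => c ⟨a, hH a⟩ := by
  rintro a b hab ⟨w, haw, hbw⟩
  exact hc (by simpa using hab) ⟨⟨w, hH w⟩, haw, hbw⟩

def IsInjColoringOn (G : SimpleGraph V) (c : V → α) (s : Set V) : Prop :=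
  ∀ ⦃a⦄, a ∈ s → ∀ ⦃b⦄, b ∈ s → a ≠ b → (∃ w, G.Adj a w ∧ G.Adj b w) → c a ≠ c b

lemma isInjColoringOn_univ {G : SimpleGraph V} {c : V → α} :
    IsInjColoringOn G c Set.univ ↔ IsInjColoring G c :=
  ⟨fun hc _ _ => hc trivial trivial, fun hc _ _ _ _ => @hc _ _⟩

lemma IsInjColoringOn.mono {G : SimpleGraph V} {c : V → α} {s t : Set V}
    (hc : IsInjColoringOn G c s) (hts : t ⊆ s) : IsInjColoringOn G c t :=
  fun _ ha _ hb => hc (hts ha) (hts hb)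

lemma IsInjColoring.isInjColoringOn_of_deleteEdge {G : SimpleGraph V} {c : V → α} {u v : V}
    (hc : IsInjColoring (G.deleteEdges {s(u, v)}) c) : IsInjColoringOn G c {u, v}ᶜ := by
  have hadj : ∀ a w, a ∉ ({u, v} : Set V) → G.Adj a w → (G.deleteEdges {s(u, v)}).Adj a w := by
    intro a w ha haw
    simp only [Set.mem_insert_iff, Set.mem_singleton_iff, not_or] at ha
    simp only [deleteEdges_adj, Set.mem_singleton_iff, Sym2.eq_iff]
    tauto
  rintro a ha b hb hab ⟨w, haw, hbw⟩
  exact hc hab ⟨w, hadj a w ha haw, hadj b w hb hbw⟩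

section Conflicts

variable (G : SimpleGraph V) [G.LocallyFinite] [DecidableEq V]

/-- The vertices that an injective coloring must color differently from `u`. -/
def SimpleGraph.conflictFinset (u : V) : Finset V :=
  (G.neighborFinset u).biUnion fun w => (G.neighborFinset w).erase u

variable {G}

lemma SimpleGraph.mem_conflictFinset {u s : V} :
    s ∈ G.conflictFinset u ↔ s ≠ u ∧ ∃ w, G.Adj u w ∧ G.Adj s w := by
  simp only [conflictFinset, mem_biUnion, mem_neighborFinset, mem_erase, adj_comm _ s]
  tauto

lemma SimpleGraph.card_conflictFinset_le (u : V) :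
    #(G.conflictFinset u) ≤ ∑ w ∈ G.neighborFinset u, (G.degree w - 1) := by
  refine card_biUnion_le.trans (sum_le_sum fun w hw => ?_)
  rw [card_erase_of_mem (by simpa [adj_comm] using hw), card_neighborFinset_eq_degree]

lemma SimpleGraph.card_conflictFinset_le_of_degree_eq_three {u v x y : V}
    (hu : G.degree u = 3) (huv : G.Adj u v) (hux : G.Adj u x) (huy : G.Adj u y)
    (hvx : v ≠ x) (hvy : v ≠ y) (hxy : x ≠ y) :
    #(G.conflictFinset u) ≤ (G.degree v - 1) + (G.degree x - 1) + (G.degree y - 1) := by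
  have hN : G.neighborFinset u = {v, x, y} :=
    (eq_of_subset_of_card_le (by simp [insert_subset_iff, huv, hux, huy])
      (by simp [card_insert_of_notMem, hvx, hvy, hxy, hu])).symm
  have := G.card_conflictFinset_le u
  rwa [hN, sum_insert (by simp [hvx, hvy]), sum_pair hxy, ← add_assoc] at this

lemma SimpleGraph.card_conflictFinset_le_of_adj {u v : V} (huv : G.Adj u v) {d : ℕ}
    (hd : ∀ w, G.degree w ≤ d) :
    #(G.conflictFinset u) ≤ (G.degree v - 1) + (G.degree u - 1) * (d - 1) := by
  have hv : v ∈ G.neighborFinset u := by simpa using huv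
  calc #(G.conflictFinset u)
      ≤ ∑ w ∈ G.neighborFinset u, (G.degree w - 1) := G.card_conflictFinset_le u
    _ = (G.degree v - 1) + ∑ w ∈ (G.neighborFinset u).erase v, (G.degree w - 1) :=
        (add_sum_erase _ _ hv).symm
    _ ≤ (G.degree v - 1) + #((G.neighborFinset u).erase v) • (d - 1) :=
        add_le_add_right (sum_le_card_nsmul _ _ _ fun w _ => Nat.sub_le_sub_right (hd w) 1) _
    _ = (G.degree v - 1) + (G.degree u - 1) * (d - 1) := by
        rw [card_erase_of_mem hv, card_neighborFinset_eq_degree, smul_eq_mul]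

lemma IsInjColoringOn.exists_update {k : ℕ} {c : V → Fin k} {s : Set V}
    (hc : IsInjColoringOn G c s) (u : V) (hu : #(G.conflictFinset u) < k) :
    ∃ γ, IsInjColoringOn G (Function.update c u γ) (insert u s) := by
  obtain ⟨γ, -, hγ⟩ := exists_mem_notMem_of_card_lt_card
    (t := univ) ((card_image_le (f := c)).trans_lt (by simpa using hu))
  have hfree : ∀ b, b ≠ u → (∃ w, G.Adj u w ∧ G.Adj b w) → Function.update c u γ b ≠ γ :=
    fun b hbu hw hcb => hγ <| mem_image.2
      ⟨b, mem_conflictFinset.2 ⟨hbu, hw⟩, by rwa [Function.update_of_ne hbu] at hcb⟩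
  refine ⟨γ, fun a ha b hb hab hw => ?_⟩
  obtain rfl | hau := eq_or_ne a u
  · rw [Function.update_self]
    exact (hfree b hab.symm hw).symm
  obtain rfl | hbu := eq_or_ne b u
  · rw [Function.update_self]
    exact hfree a hau (hw.imp fun _ => And.symm)
  rw [Function.update_of_ne hau, Function.update_of_ne hbu]
  exact hc (ha.resolve_left hau) (hb.resolve_left hbu) hab hw

end Conflicts

end InjectiveColoring

/-- (RC4 for `Δ = 4`.)  Suppose `Δ(G) = 4` and every proper subgraph `H` of `G`
satisfies `χᵢ(H) ≤ 6`.  If `G` has a `3`-vertex adjacent to one `2`-vertex and two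
`3`-vertices, then `χᵢ(G) ≤ 6`. -/
theorem rc4_maxDegree_four {V : Type*} [Fintype V] (G : SimpleGraph V)
    [DecidableRel G.Adj] (hΔ : G.maxDegree = 4)
    (hmin : ∀ H : G.Subgraph, H ≠ ⊤ → injChromNum H.coe ≤ 6)
    (h : ∃ u v x y : V, G.degree u = 3 ∧ G.Adj u v ∧ G.Adj u x ∧ G.Adj u y ∧
      v ≠ x ∧ v ≠ y ∧ x ≠ y ∧ G.degree v = 2 ∧ G.degree x = 3 ∧ G.degree y = 3) :
    injChromNum G ≤ 6 := by
  classical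
  obtain ⟨u, v, x, y, hdu, huv, hux, huy, hvx, hvy, hxy, hdv, hdx, hdy⟩ := h
  set H : G.Subgraph := (⊤ : G.Subgraph).deleteEdges {s(u, v)}
  have hH : H ≠ ⊤ := fun hH => absurd huv (by simpa [H] using congrArg (·.Adj u v) hH)
  obtain ⟨c, hc⟩ := exists_isInjColoring_of_injChromNum_le (hmin H hH)
  have hc' := hc.spanningCoe (H := H) fun _ => trivial
  rw [← Subgraph.deleteEdges_spanningCoe_eq, Subgraph.spanningCoe_top] at hc'
  have hu : #(G.conflictFinset u) < 6 := by
    have := G.card_conflictFinset_le_of_degree_eq_three hdu huv hux huy hvx hvy hxy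
    omega
  have hv : #(G.conflictFinset v) < 6 := by
    have := G.card_conflictFinset_le_of_adj huv.symm (d := 4) (hΔ ▸ G.degree_le_maxDegree ·)
    omega
  obtain ⟨α, hα⟩ := hc'.isInjColoringOn_of_deleteEdge.exists_update u hu
  obtain ⟨β, hβ⟩ := hα.exists_update v hv
  refine injChromNum_le_of_isInjColoring (isInjColoringOn_univ.1 (hβ.mono fun a _ => ?_))
  by_cases a = u <;> by_cases a = v <;> simp_all
end
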